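/- arXiv:2601.22473 — 5 statements merged into one kernel-verified Lean document; each statement's English description precedes it below -/
import Mathlib

section
/- Let n ≥ 1 and let ‖·‖ and ‖·‖′ be two norms on ℝ^n. Suppose f : B̄_{‖·‖}(0,1) → B̄_{‖·‖′}(0,1) is a map with f(0) = 0 and ‖f(u) − f(v)‖′ = ‖u − v‖ for all u, v in B̄_{‖·‖}(0,1). Then f is surjective onto B̄_{‖·‖′}(0,1); in particular f is an isometry between the closed unit balls of the two normed spaces. -/
open Metric Set MeasureTheory

section MyAux
set_option linter.unusedSectionVars false
variable {E : Type*} [NormedAddCommGroup E] [NormedSpace ℝ E] [FiniteDimensional ℝ E]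

theorem my_sum_le (N : E → ℝ) (hN0 : N 0 = 0)
    (hNadd : ∀ u v, N (u + v) ≤ N u + N v) {ι : Type*} (s : Finset ι) (g : ι → E) :
    N (∑ i ∈ s, g i) ≤ ∑ i ∈ s, N (g i) := by
  classical
  induction s using Finset.induction_on with
  | empty => simp [hN0]
  | @insert a s h ih =>
    rw [Finset.sum_insert h, Finset.sum_insert h]
    exact le_trans (hNadd _ _) (by gcongr)

theorem my_upper (N : E → ℝ)
    (hN0 : ∀ u, 0 ≤ N u) (hNz : N 0 = 0)
    (hNsmul : ∀ (c : ℝ) u, N (c • u) = |c| * N u)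
    (hNadd : ∀ u v, N (u + v) ≤ N u + N v) :
    ∃ C : ℝ, 0 < C ∧ ∀ x, N x ≤ C * ‖x‖ := by
  classical
  set b := Module.Basis.ofVectorSpace ℝ E
  refine ⟨∑ i, ‖LinearMap.toContinuousLinearMap (b.coord i)‖ * N (b i) + 1, ?_, fun x => ?_⟩
  · have : (0:ℝ) ≤ ∑ i, ‖LinearMap.toContinuousLinearMap (b.coord i)‖ * N (b i) :=
      Finset.sum_nonneg fun i _ => mul_nonneg (norm_nonneg _) (hN0 _)
    linarith
  have hx : x = ∑ i, b.repr x i • b i := (b.sum_repr x).symm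
  calc N x = N (∑ i, b.repr x i • b i) := by rw [← hx]
    _ ≤ ∑ i, N (b.repr x i • b i) := my_sum_le N hNz hNadd _ _
    _ ≤ ∑ i, (‖LinearMap.toContinuousLinearMap (b.coord i)‖ * N (b i)) * ‖x‖ := by
        apply Finset.sum_le_sum
        intro i _
        rw [hNsmul]
        have h1 : |b.repr x i| ≤ ‖LinearMap.toContinuousLinearMap (b.coord i)‖ * ‖x‖ := by
          have := (LinearMap.toContinuousLinearMap (b.coord i)).le_opNorm x
          simpa [Real.norm_eq_abs, Module.Basis.coord_apply] using this
        calc |b.repr x i| * N (b i)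
            ≤ (‖LinearMap.toContinuousLinearMap (b.coord i)‖ * ‖x‖) * N (b i) :=
              mul_le_mul_of_nonneg_right h1 (hN0 _)
          _ = (‖LinearMap.toContinuousLinearMap (b.coord i)‖ * N (b i)) * ‖x‖ := by ring
    _ = (∑ i, ‖LinearMap.toContinuousLinearMap (b.coord i)‖ * N (b i)) * ‖x‖ := by
        rw [Finset.sum_mul]
    _ ≤ (∑ i, ‖LinearMap.toContinuousLinearMap (b.coord i)‖ * N (b i) + 1) * ‖x‖ := by
        have := norm_nonneg x
        nlinarith

theorem my_abs_sub (N : E → ℝ)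
    (hNsmul : ∀ (c : ℝ) u, N (c • u) = |c| * N u)
    (hNadd : ∀ u v, N (u + v) ≤ N u + N v) (u v : E) :
    |N u - N v| ≤ N (u - v) := by
  rw [abs_le]
  constructor
  · have := hNadd (v - u) u
    have h2 : N (v - u) = N (u - v) := by
      have h3 : v - u = (-1 : ℝ) • (u - v) := by module
      rw [h3, hNsmul]; simp
    simp only [sub_add_cancel] at this
    linarith
  · have := hNadd (u - v) v
    simp only [sub_add_cancel] at this
    linarith

theorem my_cont (N : E → ℝ)
    (hNsmul : ∀ (c : ℝ) u, N (c • u) = |c| * N u)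
    (hNadd : ∀ u v, N (u + v) ≤ N u + N v)
    {C : ℝ} (hC : 0 < C) (hub : ∀ x, N x ≤ C * ‖x‖) : Continuous N := by
  apply (LipschitzWith.of_dist_le_mul (K := ⟨C, hC.le⟩) (f := N) ?_).continuous
  intro u v
  calc dist (N u) (N v) = |N u - N v| := Real.dist_eq _ _
    _ ≤ N (u - v) := my_abs_sub N hNsmul hNadd u v
    _ ≤ C * ‖u - v‖ := hub _
    _ = C * dist u v := by rw [dist_eq_norm]

theorem my_lower [Nontrivial E] (N : E → ℝ)
    (hN0 : ∀ u, 0 ≤ N u) (hNdef : ∀ u, N u = 0 ↔ u = 0)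
    (hNsmul : ∀ (c : ℝ) u, N (c • u) = |c| * N u)
    (hNadd : ∀ u v, N (u + v) ≤ N u + N v)
    {C : ℝ} (hC : 0 < C) (hub : ∀ x, N x ≤ C * ‖x‖) :
    ∃ c : ℝ, 0 < c ∧ ∀ x, c * ‖x‖ ≤ N x := by
  have hcont : Continuous N := my_cont N hNsmul hNadd hC hub
  have hsne : (sphere (0:E) 1).Nonempty := NormedSpace.sphere_nonempty.2 zero_le_one
  obtain ⟨x₀, hx₀mem, hx₀min⟩ :=
    (isCompact_sphere (0:E) 1).exists_isMinOn hsne hcont.continuousOn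
  have hx₀norm : ‖x₀‖ = 1 := by simpa using hx₀mem
  have hx₀ne : x₀ ≠ 0 := by intro h; rw [h] at hx₀norm; simp at hx₀norm
  have hm : 0 < N x₀ := lt_of_le_of_ne (hN0 _) fun h => hx₀ne ((hNdef x₀).1 h.symm)
  refine ⟨N x₀, hm, fun x => ?_⟩
  rcases eq_or_ne x 0 with rfl | hx
  · simp [(hNdef 0).2 rfl]
  · have hxn : (0:ℝ) < ‖x‖ := norm_pos_iff.2 hx
    have hmem : ‖x‖⁻¹ • x ∈ sphere (0:E) 1 := by
      simp [norm_smul, abs_of_pos (inv_pos.2 hxn), inv_mul_cancel₀ hxn.ne']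
    have hge : N x₀ ≤ N (‖x‖⁻¹ • x) := hx₀min hmem
    have hval : N (‖x‖⁻¹ • x) = ‖x‖⁻¹ * N x := by
      rw [hNsmul]; rw [abs_of_pos (inv_pos.2 hxn)]
    rw [hval] at hge
    calc N x₀ * ‖x‖ ≤ (‖x‖⁻¹ * N x) * ‖x‖ := mul_le_mul_of_nonneg_right hge hxn.le
      _ = N x := by field_simp
end MyAux

set_option maxHeartbeats 2000000 in
/-- Let `N` and `N'` be two norms on `ℝⁿ` (`n ≥ 1`). If `f` maps the closed unit ball of `N`
into the closed unit ball of `N'`, fixes the origin, and satisfies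
`N'(f u − f v) = N(u − v)` for all `u,v` in the unit ball of `N`, then `f` is surjective onto
the closed unit ball of `N'`; in particular it is an isometric bijection between the two balls. -/
theorem stmt7 {n : ℕ} (hn : 1 ≤ n)
    (N N' : EuclideanSpace ℝ (Fin n) → ℝ)
    (hN0 : ∀ u, 0 ≤ N u) (hNdef : ∀ u, N u = 0 ↔ u = 0)
    (hNsmul : ∀ (c : ℝ) u, N (c • u) = |c| * N u)
    (hNadd : ∀ u v, N (u + v) ≤ N u + N v)
    (hN'0 : ∀ u, 0 ≤ N' u) (hN'def : ∀ u, N' u = 0 ↔ u = 0)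
    (hN'smul : ∀ (c : ℝ) u, N' (c • u) = |c| * N' u)
    (hN'add : ∀ u v, N' (u + v) ≤ N' u + N' v)
    (f : EuclideanSpace ℝ (Fin n) → EuclideanSpace ℝ (Fin n))
    (hmap : Set.MapsTo f {u | N u ≤ 1} {v | N' v ≤ 1})
    (hf0 : f 0 = 0)
    (hiso : ∀ u ∈ {u | N u ≤ 1}, ∀ v ∈ {u | N u ≤ 1}, N' (f u - f v) = N (u - v)) :
    Set.SurjOn f {u | N u ≤ 1} {v | N' v ≤ 1} ∧
      Set.BijOn f {u | N u ≤ 1} {v | N' v ≤ 1} := by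
  classical
  haveI : Nontrivial (EuclideanSpace ℝ (Fin n)) := by
    apply Module.nontrivial_of_finrank_pos (R := ℝ)
    rw [finrank_euclideanSpace_fin]
    omega
  obtain ⟨C, hCpos, hCub⟩ := my_upper N hN0 ((hNdef 0).2 rfl) hNsmul hNadd
  obtain ⟨C', hC'pos, hC'ub⟩ := my_upper N' hN'0 ((hN'def 0).2 rfl) hN'smul hN'add
  obtain ⟨c, hcpos, hclb⟩ := my_lower N hN0 hNdef hNsmul hNadd hCpos hCub
  obtain ⟨c', hc'pos, hc'lb⟩ := my_lower N' hN'0 hN'def hN'smul hN'add hC'pos hC'ub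
  have hNcont : Continuous N := my_cont N hNsmul hNadd hCpos hCub
  have hN'cont : Continuous N' := my_cont N' hN'smul hN'add hC'pos hC'ub
  set K : Set (EuclideanSpace ℝ (Fin n)) := {u | N u ≤ 1} with hK
  set B' : Set (EuclideanSpace ℝ (Fin n)) := {v | N' v ≤ 1} with hB'
  set oB : Set (EuclideanSpace ℝ (Fin n)) := {u | N u < 1} with hoB
  set oB' : Set (EuclideanSpace ℝ (Fin n)) := {v | N' v < 1} with hoB'
  have hoB_open : IsOpen oB := isOpen_lt hNcont continuous_const
  have hoB'_open : IsOpen oB' := isOpen_lt hN'cont continuous_const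
  have hK_closed : IsClosed K := isClosed_le hNcont continuous_const
  have hoBK : oB ⊆ K := fun x (hx : N x < 1) => (le_of_lt hx : N x ≤ 1)
  have hoB'B' : oB' ⊆ B' := fun x (hx : N' x < 1) => (le_of_lt hx : N' x ≤ 1)
  have h0K : (0:EuclideanSpace ℝ (Fin n)) ∈ K := by simp [hK, (hNdef 0).2 rfl]
  have h0oB : (0:EuclideanSpace ℝ (Fin n)) ∈ oB := by simp [hoB, (hNdef 0).2 rfl]
  have h0oB' : (0:EuclideanSpace ℝ (Fin n)) ∈ oB' := by simp [hoB', (hN'def 0).2 rfl]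
  have hKsub : K ⊆ Metric.closedBall (0:EuclideanSpace ℝ (Fin n)) (1/c) := by
    intro x hx
    rw [mem_closedBall_zero_iff]
    have h1 : c * ‖x‖ ≤ 1 := le_trans (hclb x) hx
    rw [le_div_iff₀ hcpos]
    linarith
  have hB'sub : B' ⊆ Metric.closedBall (0:EuclideanSpace ℝ (Fin n)) (1/c') := by
    intro x hx
    rw [mem_closedBall_zero_iff]
    have h1 : c' * ‖x‖ ≤ 1 := le_trans (hc'lb x) hx
    rw [le_div_iff₀ hc'pos]
    linarith
  have hKcomp : IsCompact K :=
    (isCompact_closedBall (0:EuclideanSpace ℝ (Fin n)) (1/c)).of_isClosed_subset hK_closed hKsub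
  have hnormf : ∀ u ∈ K, N' (f u) = N u := by
    intro u hu
    have := hiso u hu 0 h0K
    rw [hf0] at this
    simpa using this
  have hinj : InjOn f K := by
    intro u hu v hv huv
    have h1 := hiso u hu v hv
    rw [huv] at h1
    rw [sub_self, (hN'def 0).2 rfl] at h1
    have := (hNdef (u - v)).1 h1.symm
    exact sub_eq_zero.1 this
  have hLip : LipschitzOnWith (Real.toNNReal (C / c')) f K := by
    rw [lipschitzOnWith_iff_dist_le_mul]
    intro u hu v hv
    rw [dist_eq_norm, dist_eq_norm]
    have h1 : c' * ‖f u - f v‖ ≤ N' (f u - f v) := hc'lb _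
    have h2 : N' (f u - f v) = N (u - v) := hiso u hu v hv
    have h3 : N (u - v) ≤ C * ‖u - v‖ := hCub _
    have h4 : ‖f u - f v‖ ≤ (C / c') * ‖u - v‖ := by
      rw [div_mul_eq_mul_div, le_div_iff₀ hc'pos]
      nlinarith
    calc ‖f u - f v‖ ≤ (C / c') * ‖u - v‖ := h4
      _ = (Real.toNNReal (C / c') : ℝ) * ‖u - v‖ := by
          rw [Real.coe_toNNReal _ (by positivity)]
  have hfcont : ContinuousOn f K := hLip.continuousOn
  set P : Set (EuclideanSpace ℝ (Fin n)) := f '' K with hP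
  have hPcomp : IsCompact P := hKcomp.image_of_continuousOn hfcont
  set D : Set (EuclideanSpace ℝ (Fin n)) := {x | DifferentiableAt ℝ f x} with hD
  have hDmeas : MeasurableSet D := measurableSet_of_differentiableAt ℝ f
  set s : Set (EuclideanSpace ℝ (Fin n)) := oB ∩ D with hs
  have hsmeas : MeasurableSet s := hoB_open.measurableSet.inter hDmeas
  -- a.e. differentiability
  have hae : ∀ᵐ x ∂(volume : Measure (EuclideanSpace ℝ (Fin n))), x ∈ K → DifferentiableWithinAt ℝ f K x :=
    hLip.ae_differentiableWithinAt_of_mem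
  have hae2 : ∀ᵐ x ∂(volume : Measure (EuclideanSpace ℝ (Fin n))), x ∈ oB → x ∈ D := by
    filter_upwards [hae] with x hx hxo
    have h1 : DifferentiableWithinAt ℝ f K x := hx (hoBK hxo)
    exact h1.differentiableAt (Filter.mem_of_superset (hoB_open.mem_nhds hxo) hoBK)
  have hnull : volume (oB \ D) = 0 := by
    have h0 := (MeasureTheory.ae_iff).1 hae2
    refine measure_mono_null ?_ h0
    intro x hx
    simp only [mem_setOf_eq, Classical.not_imp]
    exact ⟨hx.1, hx.2⟩
  have hμs : volume s = volume oB := by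
    have hset : s = oB \ (oB \ D) := by
      ext x; simp only [hs, mem_inter_iff, mem_diff]; tauto
    rw [hset, measure_diff_null hnull]
  have hoBpos : 0 < volume oB := hoB_open.measure_pos volume ⟨0, h0oB⟩
  have hoBfin : volume oB < ⊤ :=
    lt_of_le_of_lt (measure_mono (fun x hx => hKsub (hoBK hx)))
      (isCompact_closedBall (0:EuclideanSpace ℝ (Fin n)) (1/c)).measure_lt_top
  have hoB'fin : volume oB' < ⊤ :=
    lt_of_le_of_lt (measure_mono (fun x hx => hB'sub (hoB'B' hx)))
      (isCompact_closedBall (0:EuclideanSpace ℝ (Fin n)) (1/c')).measure_lt_top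
  -- the derivative is norm preserving, hence has constant |det|
  have key : ∀ x ∈ s, ENNReal.ofReal |(fderiv ℝ f x).det| = volume oB' / volume oB := by
    rintro x ⟨hxo, hxD⟩
    set T := fderiv ℝ f x with hT
    have hTnorm : ∀ h : EuclideanSpace ℝ (Fin n), N' (T h) = N h := by
      intro h
      rcases eq_or_ne h 0 with rfl | hne
      · rw [map_zero, (hN'def 0).2 rfl, (hNdef 0).2 rfl]
      have hkey : ∀ ε > (0:ℝ), |N' (T h) - N h| ≤ ε := by
        intro ε hε
        set ε' : ℝ := ε / (C' * (‖h‖ + 1)) with hε'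
        have hε'pos : 0 < ε' := by
          apply div_pos hε
          have := norm_nonneg h
          positivity
        have hev1 : ∀ᶠ y in nhds x, ‖f y - f x - T (y - x)‖ ≤ ε' * ‖y - x‖ :=
          ((hxD.hasFDerivAt.isLittleO).def hε'pos)
        have hev2 : ∀ᶠ y in nhds x, y ∈ oB := hoB_open.eventually_mem hxo
        obtain ⟨δ, hδpos, hδ⟩ := Metric.eventually_nhds_iff.1 (hev1.and hev2)
        set t : ℝ := δ / (2 * (‖h‖ + 1)) with ht
        have htpos : 0 < t := by
          apply div_pos hδpos
          have := norm_nonneg h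
          positivity
        set y : EuclideanSpace ℝ (Fin n) := x + t • h with hy
        have hdist : dist y x < δ := by
          rw [hy, dist_eq_norm, add_sub_cancel_left, norm_smul, Real.norm_eq_abs,
            abs_of_pos htpos]
          have h1 : ‖h‖ < ‖h‖ + 1 := by linarith
          have h2 : t * ‖h‖ < t * (‖h‖ + 1) := by
            apply mul_lt_mul_of_pos_left h1 htpos
          have h3 : t * (‖h‖ + 1) = δ / 2 := by
            rw [ht]; field_simp
          have := norm_nonneg h
          nlinarith
        obtain ⟨hb, hyo⟩ := hδ hdist
        have hyx : y - x = t • h := by rw [hy]; abel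
        have hisoy : N' (f y - f x) = N (y - x) := hiso y (hoBK hyo) x (hoBK hxo)
        have hNyx : N (y - x) = t * N h := by
          rw [hyx, hNsmul, abs_of_pos htpos]
        have hTyx : N' (T (y - x)) = t * N' (T h) := by
          rw [hyx, T.map_smul, hN'smul, abs_of_pos htpos]
        have hstep : |t * N' (T h) - t * N h| ≤ C' * (ε' * (t * ‖h‖)) := by
          calc |t * N' (T h) - t * N h|
              = |N' (T (y - x)) - N' (f y - f x)| := by rw [hTyx, hisoy, hNyx]
            _ ≤ N' (T (y - x) - (f y - f x)) := my_abs_sub N' hN'smul hN'add _ _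
            _ ≤ C' * ‖T (y - x) - (f y - f x)‖ := hC'ub _
            _ = C' * ‖f y - f x - T (y - x)‖ := by rw [norm_sub_rev]
            _ ≤ C' * (ε' * ‖y - x‖) := by
                apply mul_le_mul_of_nonneg_left hb hC'pos.le
            _ = C' * (ε' * (t * ‖h‖)) := by
                rw [hyx, norm_smul, Real.norm_eq_abs, abs_of_pos htpos]
        have hfact : |t * N' (T h) - t * N h| = t * |N' (T h) - N h| := by
          rw [← mul_sub, abs_mul, abs_of_pos htpos]
        rw [hfact] at hstep
        have hdiv : |N' (T h) - N h| ≤ C' * ε' * ‖h‖ := by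
          have := mul_le_mul_of_nonneg_left hstep (le_of_lt (inv_pos.2 htpos))
          rw [← mul_assoc, inv_mul_cancel₀ htpos.ne', one_mul] at this
          calc |N' (T h) - N h| ≤ t⁻¹ * (C' * (ε' * (t * ‖h‖))) := this
            _ = C' * ε' * ‖h‖ := by field_simp
        have hfin : C' * ε' * ‖h‖ ≤ ε := by
          have hX : (0:ℝ) < C' * (‖h‖ + 1) := by positivity
          have e1 : C' * ε' * ‖h‖ = ε * ((C' * ‖h‖) / (C' * (‖h‖ + 1))) := by
            rw [hε']; field_simp
          have e2 : (C' * ‖h‖) / (C' * (‖h‖ + 1)) ≤ 1 := by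
            rw [div_le_one hX]
            nlinarith [norm_nonneg h]
          calc C' * ε' * ‖h‖ = ε * ((C' * ‖h‖) / (C' * (‖h‖ + 1))) := e1
            _ ≤ ε * 1 := mul_le_mul_of_nonneg_left e2 hε.le
            _ = ε := mul_one ε
        linarith
      have habs : |N' (T h) - N h| ≤ 0 := by
        by_contra hcon
        push_neg at hcon
        have := hkey (|N' (T h) - N h| / 2) (by linarith)
        linarith
      have := abs_nonneg (N' (T h) - N h)
      have h0 : |N' (T h) - N h| = 0 := le_antisymm habs this
      have := abs_eq_zero.1 h0
      linarith [this]
    -- T is bijective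
    set Tl : EuclideanSpace ℝ (Fin n) →ₗ[ℝ] EuclideanSpace ℝ (Fin n) := (T : EuclideanSpace ℝ (Fin n) →ₗ[ℝ] EuclideanSpace ℝ (Fin n)) with hTl
    have hTinj : Function.Injective Tl := by
      intro a b hab
      have h1 : Tl (a - b) = 0 := by rw [map_sub, hab, sub_self]
      have h2 : N' (T (a - b)) = 0 := by
        show N' (Tl (a - b)) = 0
        rw [h1, (hN'def 0).2 rfl]
      rw [hTnorm] at h2
      exact sub_eq_zero.1 ((hNdef _).1 h2)
    have hTsurj : Function.Surjective Tl := LinearMap.injective_iff_surjective.1 hTinj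
    have hTimg : ⇑Tl '' oB = oB' := by
      ext y
      constructor
      · rintro ⟨x', hx', rfl⟩
        show N' (T x') < 1
        rw [hTnorm]
        exact hx'
      · intro hy
        obtain ⟨x', rfl⟩ := hTsurj y
        refine ⟨x', ?_, rfl⟩
        show N x' < 1
        rw [← hTnorm x']
        exact hy
    have hdet : volume oB' = ENNReal.ofReal |Tl.det| * volume oB := by
      rw [← hTimg, Measure.addHaar_image_linearMap]
    have hdet2 : ENNReal.ofReal |(fderiv ℝ f x).det| = volume oB' / volume oB := by
      rw [(ENNReal.eq_div_iff hoBpos.ne' hoBfin.ne)]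
      rw [hdet]
      ring
    exact hdet2
  have hsinj : InjOn f s := hinj.mono (fun x hx => hoBK hx.1)
  have hchange : ∫⁻ x in s, ENNReal.ofReal |(fderiv ℝ f x).det| ∂volume = volume (f '' s) :=
    lintegral_abs_det_fderiv_eq_addHaar_image volume hsmeas
      (fun x hx => (hx.2.hasFDerivAt).hasFDerivWithinAt) hsinj
  have hvolimg : volume (f '' s) = volume oB' := by
    rw [← hchange]
    rw [setLIntegral_congr_fun hsmeas
      (fun x hx => key x hx)]
    rw [setLIntegral_const, hμs, ENNReal.div_mul_cancel hoBpos.ne' hoBfin.ne]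
  have himgsub : f '' s ⊆ P ∩ oB' := by
    rintro _ ⟨x, hx, rfl⟩
    refine ⟨⟨x, hoBK hx.1, rfl⟩, ?_⟩
    show N' (f x) < 1
    rw [hnormf x (hoBK hx.1)]
    exact hx.1
  have hoB'P : oB' ⊆ P := by
    by_contra hcon
    rw [Set.not_subset] at hcon
    obtain ⟨y, hy, hyP⟩ := hcon
    set U : Set (EuclideanSpace ℝ (Fin n)) := oB' \ P with hU
    have hUopen : IsOpen U := hoB'_open.sdiff hPcomp.isClosed
    have hUpos : 0 < volume U := hUopen.measure_pos volume ⟨y, hy, hyP⟩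
    have hsplit : oB' = (oB' ∩ P) ∪ U := by
      ext z; simp only [hU, mem_union, mem_inter_iff, mem_diff]; tauto
    have hdisj : Disjoint (oB' ∩ P) U := by
      rw [Set.disjoint_iff]
      rintro z ⟨⟨_, hzP⟩, _, hzP'⟩
      exact absurd hzP hzP'
    have hUmeas : MeasurableSet U := hUopen.measurableSet
    have heq : volume oB' = volume (oB' ∩ P) + volume U := by
      conv_lhs => rw [hsplit]
      exact measure_union hdisj hUmeas
    have hge : volume oB' ≤ volume (oB' ∩ P) := by
      rw [← hvolimg]
      apply measure_mono
      intro z hz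
      obtain ⟨hz1, hz2⟩ := himgsub hz
      exact ⟨hz2, hz1⟩
    have hle : volume oB' + volume U ≤ volume oB' + 0 := by
      rw [add_zero]
      calc volume oB' + volume U ≤ volume (oB' ∩ P) + volume U := by
            exact add_le_add hge le_rfl
        _ = volume oB' := heq.symm
    have hU0 : volume U ≤ 0 := (ENNReal.add_le_add_iff_left hoB'fin.ne).1 hle
    exact absurd (le_antisymm hU0 zero_le) hUpos.ne'
  have hB'P : B' ⊆ P := by
    intro y hy
    have hyc : y ∈ closure P := by
      rw [Metric.mem_closure_iff]
      intro ε hε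
      set m : ℝ := min 1 (ε / (2 * (‖y‖ + 1))) with hm
      have hmpos : 0 < m := by
        apply lt_min one_pos
        apply div_pos hε
        have := norm_nonneg y
        positivity
      have hm1 : m ≤ 1 := min_le_left _ _
      set t : ℝ := 1 - m with htdef
      have ht0 : 0 ≤ t := by simp [htdef]; linarith
      have ht1 : t < 1 := by simp [htdef]; linarith
      refine ⟨t • y, hoB'P ?_, ?_⟩
      · show N' (t • y) < 1
        rw [hN'smul, abs_of_nonneg ht0]
        have hy1 : N' y ≤ 1 := hy
        calc t * N' y ≤ t * 1 := mul_le_mul_of_nonneg_left hy1 ht0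
          _ = t := mul_one t
          _ < 1 := ht1
      · rw [dist_eq_norm]
        have : y - t • y = m • y := by
          rw [htdef]; module
        rw [this, norm_smul, Real.norm_eq_abs, abs_of_pos hmpos]
        have h1 : m ≤ ε / (2 * (‖y‖ + 1)) := min_le_right _ _
        have h2 : m * ‖y‖ ≤ (ε / (2 * (‖y‖ + 1))) * ‖y‖ :=
          mul_le_mul_of_nonneg_right h1 (norm_nonneg _)
        have h3 : (ε / (2 * (‖y‖ + 1))) * ‖y‖ < ε := by
          rw [div_mul_eq_mul_div, div_lt_iff₀ (by positivity)]
          have := norm_nonneg y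
          nlinarith
        linarith
    rwa [hPcomp.isClosed.closure_eq] at hyc
  have hsurj : Set.SurjOn f K B' := hB'P
  exact ⟨hsurj, hmap, hinj, hsurj⟩
end

section
/- Let (A_i) be a sequence of nonempty closed subsets of ℝ^d, A a nonempty closed subset, and x ∈ ℝ^d. Then lim_{i→∞} D^{x,r}[A_i,A] = 0 for every r > 0 if and only if lim_{i→∞} H^x[A_i,A] = 0, where H^x[A,B] = inf{ε ∈ (0,1] : D^{x,1/ε}[A,B] ≤ ε²} (equal to 1 if no admissible ε exists). -/
open Metric Set Filter
open scoped ENNReal NNReal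

/-- The excess of `A` over `B`: `ex(A,B) = sup_{a ∈ A} inf_{b ∈ B} d(a,b)`,
with the convention `ex(∅,B) = 0`. -/
noncomputable def exc {X : Type*} [PseudoEMetricSpace X] (A B : Set X) : ℝ≥0∞ :=
  ⨆ a ∈ A, ⨅ b ∈ B, edist a b

/-- The relative Walkup-Wets distance in the closed ball `B(x,r)`:
`D^{x,r}[A,B] = r⁻¹ · max(ex(A ∩ B(x,r), B), ex(B ∩ B(x,r), A))`. -/
noncomputable def WW {X : Type*} [PseudoMetricSpace X] (x : X) (r : ℝ) (A B : Set X) : ℝ≥0∞ :=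
  (ENNReal.ofReal r)⁻¹ *
    max (exc (A ∩ Metric.closedBall x r) B) (exc (B ∩ Metric.closedBall x r) A)

/-- Gromov's pointed distance: `H^x[A,B] = inf{ε ∈ (0,1] : D^{x,1/ε}[A,B] ≤ ε²}`,
interpreted as `1` if the set of admissible `ε` is empty. -/
noncomputable def GromovH {X : Type*} [PseudoMetricSpace X] (x : X) (A B : Set X) : ℝ :=
  sInf ({1} ∪ {ε : ℝ | ε ∈ Set.Ioc (0 : ℝ) 1 ∧ WW x (1 / ε) A B ≤ ENNReal.ofReal (ε ^ 2)})

lemma exc_mono_left {X : Type*} [PseudoEMetricSpace X] {A A' : Set X} (h : A ⊆ A') (B : Set X) :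
    exc A B ≤ exc A' B := biSup_mono h

lemma WW_mono {X : Type*} [PseudoMetricSpace X] (x : X) {r s : ℝ} (hr : 0 < r) (hrs : r ≤ s)
    (A B : Set X) :
    WW x r A B ≤ (ENNReal.ofReal r)⁻¹ * (ENNReal.ofReal s * WW x s A B) := by
  have hs : 0 < s := hr.trans_le hrs
  have hse : ENNReal.ofReal s ≠ 0 := (ENNReal.ofReal_pos.2 hs).ne'
  unfold WW
  rw [← mul_assoc (ENNReal.ofReal s), ENNReal.mul_inv_cancel hse ENNReal.ofReal_ne_top, one_mul]
  refine mul_le_mul_right (max_le_max ?_ ?_) _ <;>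
    exact exc_mono_left (inter_subset_inter_right _
      (closedBall_subset_closedBall hrs)) _

lemma exists_ofReal_le {c : ℝ≥0∞} (hc : 0 < c) : ∃ t : ℝ, 0 < t ∧ ENNReal.ofReal t ≤ c := by
  rcases eq_or_ne c ⊤ with rfl | h
  · exact ⟨1, one_pos, le_top⟩
  · refine ⟨min 1 c.toReal, lt_min one_pos (ENNReal.toReal_pos hc.ne' h), ?_⟩
    calc ENNReal.ofReal (min 1 c.toReal) ≤ ENNReal.ofReal c.toReal :=
          ENNReal.ofReal_le_ofReal (min_le_right _ _)
      _ = c := ENNReal.ofReal_toReal h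

lemma GromovH_nonneg {X : Type*} [PseudoMetricSpace X] (x : X) (A B : Set X) :
    0 ≤ GromovH x A B := by
  apply Real.sInf_nonneg
  rintro y (rfl | ⟨⟨hy, _⟩, _⟩)
  · exact zero_le_one
  · exact hy.le

lemma GromovH_bddBelow {X : Type*} [PseudoMetricSpace X] (x : X) (A B : Set X) :
    BddBelow ({1} ∪ {ε : ℝ | ε ∈ Set.Ioc (0 : ℝ) 1 ∧ WW x (1 / ε) A B ≤ ENNReal.ofReal (ε ^ 2)}) := by
  refine ⟨0, ?_⟩
  rintro y (rfl | ⟨⟨hy, _⟩, _⟩)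
  · exact zero_le_one
  · exact hy.le


/-- `D^{x,r}[Aᵢ,A] → 0` for all `r > 0` iff `H^x[Aᵢ,A] → 0`. -/
theorem stmt10 {d : ℕ} (A : ℕ → Set (EuclideanSpace ℝ (Fin d)))
    (hA : ∀ i, IsClosed (A i) ∧ (A i).Nonempty)
    (T : Set (EuclideanSpace ℝ (Fin d))) (hT : IsClosed T) (hTne : T.Nonempty)
    (x : EuclideanSpace ℝ (Fin d)) :
    (∀ r : ℝ, 0 < r → Tendsto (fun i => WW x r (A i) T) atTop (nhds 0)) ↔
      Tendsto (fun i => GromovH x (A i) T) atTop (nhds 0) := by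
  constructor
  · intro h
    rw [Metric.tendsto_nhds]
    intro ε' hε'
    set ε : ℝ := min (ε' / 2) 1 with hεdef
    have hε : 0 < ε := lt_min (by positivity) one_pos
    have hεlt : ε < ε' := (min_le_left _ _).trans_lt (by linarith)
    have h1 : (0:ℝ) < 1 / ε := by positivity
    have hev : ∀ᶠ i in atTop, WW x (1 / ε) (A i) T ≤ ENNReal.ofReal (ε ^ 2) := by
      filter_upwards [(h (1 / ε) h1).eventually_lt_const
        (ENNReal.ofReal_pos.2 (by positivity : (0:ℝ) < ε ^ 2))] with i hi
      exact hi.le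
    filter_upwards [hev] with i hi
    have hmem : ε ∈ ({1} ∪ {e : ℝ | e ∈ Set.Ioc (0 : ℝ) 1 ∧
        WW x (1 / e) (A i) T ≤ ENNReal.ofReal (e ^ 2)}) :=
      Or.inr ⟨⟨hε, min_le_right _ _⟩, hi⟩
    have hle : GromovH x (A i) T ≤ ε := csInf_le (GromovH_bddBelow x (A i) T) hmem
    have hge : 0 ≤ GromovH x (A i) T := GromovH_nonneg x (A i) T
    rw [Real.dist_eq, sub_zero, abs_of_nonneg hge]
    exact hle.trans_lt hεlt
  · intro h r hr
    rw [ENNReal.tendsto_nhds_zero]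
    intro δ hδ
    have hrpos : (0:ℝ≥0∞) < ENNReal.ofReal r := ENNReal.ofReal_pos.2 hr
    have hc : (0:ℝ≥0∞) < δ * ENNReal.ofReal r := by
      exact ENNReal.mul_pos hδ.ne' hrpos.ne'
    obtain ⟨t, ht, htle⟩ := exists_ofReal_le hc
    set η : ℝ := min t (min r⁻¹ 1) with hηdef
    have hη : 0 < η := lt_min ht (lt_min (by positivity) one_pos)
    have hev : ∀ᶠ i in atTop, GromovH x (A i) T < η := h.eventually_lt_const hη
    filter_upwards [hev] with i hi
    -- extract an admissible ε₀ < η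
    have hSne : ({1} ∪ {e : ℝ | e ∈ Set.Ioc (0 : ℝ) 1 ∧
        WW x (1 / e) (A i) T ≤ ENNReal.ofReal (e ^ 2)}).Nonempty := ⟨1, Or.inl rfl⟩
    obtain ⟨ε₀, hε₀mem, hε₀lt⟩ := exists_lt_of_csInf_lt hSne hi
    have hηle1 : η ≤ 1 := (min_le_right _ _).trans (min_le_right _ _)
    have hε₀lt1 : ε₀ < 1 := hε₀lt.trans_le hηle1
    rcases hε₀mem with rfl | ⟨⟨hε₀pos, _⟩, hWW⟩
    · exact absurd hε₀lt1 (lt_irrefl _)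
    -- r ≤ 1/ε₀
    have hε₀r : ε₀ ≤ r⁻¹ := hε₀lt.le.trans ((min_le_right _ _).trans (min_le_left _ _))
    have hrs : r ≤ 1 / ε₀ := by
      rw [one_div, ← inv_inv r]
      exact inv_anti₀ hε₀pos hε₀r
    calc WW x r (A i) T
        ≤ (ENNReal.ofReal r)⁻¹ * (ENNReal.ofReal (1 / ε₀) * WW x (1 / ε₀) (A i) T) :=
          WW_mono x hr hrs _ _
      _ ≤ (ENNReal.ofReal r)⁻¹ * (ENNReal.ofReal (1 / ε₀) * ENNReal.ofReal (ε₀ ^ 2)) := by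
          gcongr
      _ = (ENNReal.ofReal r)⁻¹ * ENNReal.ofReal ε₀ := by
          rw [← ENNReal.ofReal_mul (by positivity)]
          congr 1
          field_simp
      _ ≤ (ENNReal.ofReal r)⁻¹ * ENNReal.ofReal t :=
          mul_le_mul_right (ENNReal.ofReal_le_ofReal
            (hε₀lt.le.trans (min_le_left _ _))) _
      _ ≤ (ENNReal.ofReal r)⁻¹ * (δ * ENNReal.ofReal r) := mul_le_mul_right htle _
      _ = δ := by
          rw [mul_comm δ, ← mul_assoc, ENNReal.inv_mul_cancel hrpos.ne' ENNReal.ofReal_ne_top,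
            one_mul]
end

section
/- Let E = {0} ∪ {2^{-n} e_n : n ∈ ℕ} ⊂ ℓ_∞, where (e_n) is the standard unit vector basis of ℓ_∞. Then E is compact, and E has no Attouch-Wets tangent at 0: for every sequence of positive scales r_j → 0, no subsequence of the rescaled sets r_j^{-1}E converges in the Attouch-Wets sense; specifically, for any i, j with r_j < 1 and r_i < r_j/4, one has ex((r_j^{-1}E) ∩ B̄(0,1), r_i^{-1}E) ≥ 1/2. -/
open Metric Set Filter
open scoped ENNReal NNReal

open scoped Pointwise

/-- The set `E = {0} ∪ {2⁻ⁿ eₙ : n ∈ ℕ} ⊂ ℓ∞`. -/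
noncomputable def Eset : Set (lp (fun _ : ℕ => ℝ) ⊤) :=
  insert 0 (Set.range fun n : ℕ => lp.single ⊤ n ((2 : ℝ) ^ (-(n : ℤ))))

/- Auxiliary lemmas -/

lemma le_exc {X : Type*} [PseudoEMetricSpace X] {A B : Set X} {a : X} (ha : a ∈ A) :
    (⨅ b ∈ B, edist a b) ≤ exc A B := by
  unfold exc; exact le_biSup (fun a => ⨅ b ∈ B, edist a b) ha

lemma exc_le {X : Type*} [PseudoEMetricSpace X] {A B : Set X} {c : ℝ≥0∞}
    (h : ∀ a ∈ A, (⨅ b ∈ B, edist a b) ≤ c) : exc A B ≤ c := by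
  unfold exc; exact iSup₂_le h

lemma exc_step {X : Type*} [MetricSpace X] (A B T : Set X) (x : X)
    (hA : A ⊆ closedBall x 1) (h1 : exc A T < ENNReal.ofReal (1/8)) :
    exc A B ≤ ENNReal.ofReal (1/8) + exc (T ∩ closedBall x 2) B := by
  refine exc_le fun a ha => ?_
  have h2 : (⨅ t ∈ T, edist a t) < ENNReal.ofReal (1/8) :=
    lt_of_le_of_lt (le_exc ha) h1
  rw [iInf_lt_iff] at h2
  obtain ⟨t, ht2⟩ := h2
  rw [iInf_lt_iff] at ht2
  obtain ⟨ht, hat⟩ := ht2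
  have hdist : dist a t < 1/8 := by
    rw [edist_dist] at hat
    exact (ENNReal.ofReal_lt_ofReal_iff (by norm_num)).1 hat
  have htball : t ∈ closedBall x 2 := by
    have hax : dist a x ≤ 1 := hA ha
    have : dist t x ≤ dist t a + dist a x := dist_triangle t a x
    rw [mem_closedBall]
    rw [dist_comm] at hdist
    linarith
  have h3 : (⨅ b ∈ B, edist a b) ≤ edist a t + ⨅ b ∈ B, edist t b := by
    rw [ENNReal.add_iInf]
    refine le_iInf fun b => ?_
    rw [ENNReal.add_iInf]
    refine le_iInf fun hb => ?_
    exact le_trans (iInf₂_le b hb) (edist_triangle a t b)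
  refine h3.trans (add_le_add hat.le ?_)
  exact le_exc ⟨ht, htball⟩

lemma exc_le_WW {X : Type*} [PseudoMetricSpace X] (x : X) {r : ℝ} (hr : 0 < r)
    (A B : Set X) :
    exc (A ∩ closedBall x r) B ≤ ENNReal.ofReal r * WW x r A B ∧
    exc (B ∩ closedBall x r) A ≤ ENNReal.ofReal r * WW x r A B := by
  have hmax : ENNReal.ofReal r * WW x r A B =
      max (exc (A ∩ closedBall x r) B) (exc (B ∩ closedBall x r) A) := by
    rw [WW, ← mul_assoc,
      ENNReal.mul_inv_cancel (ENNReal.ofReal_pos.2 hr).ne' ENNReal.ofReal_ne_top, one_mul]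
  rw [hmax]
  exact ⟨le_max_left _ _, le_max_right _ _⟩

lemma norm_single_le (n : ℕ) (c : ℝ) : ‖(lp.single ⊤ n c : lp (fun _ : ℕ => ℝ) ⊤)‖ ≤ |c| := by
  refine lp.norm_le_of_forall_le (abs_nonneg c) fun j => ?_
  by_cases h : j = n
  · subst h; rw [lp.single_apply_self]; exact (Real.norm_eq_abs c).le
  · rw [lp.single_apply_ne _ _ _ h]; simp [abs_nonneg]

lemma coord_le (f : lp (fun _ : ℕ => ℝ) ⊤) (n : ℕ) : |f n| ≤ ‖f‖ := by
  rw [← Real.norm_eq_abs]; exact lp.norm_apply_le_norm ENNReal.top_ne_zero f n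

lemma coord_le_dist (f g : lp (fun _ : ℕ => ℝ) ⊤) (n : ℕ) : |f n - g n| ≤ dist f g := by
  rw [dist_eq_norm]
  have := coord_le (f - g) n
  rwa [lp.coeFn_sub, Pi.sub_apply] at this

lemma excLower (ri rj : ℝ) (hri : 0 < ri) (hrj : 0 < rj) (hrj1 : rj < 1)
    (hrirj : ri < rj / 4) :
    ENNReal.ofReal (1 / 2) ≤
      exc ((rj⁻¹ • Eset) ∩ Metric.closedBall (0 : lp (fun _ : ℕ => ℝ) ⊤) 1)
        (ri⁻¹ • Eset) := by
  classical
  -- choose minimal n with 2^{-n} ≤ rj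
  have hex : ∃ n : ℕ, (2:ℝ)^(-(n:ℤ)) ≤ rj := by
    obtain ⟨n, hn⟩ := exists_pow_lt_of_lt_one hrj (show (1:ℝ)/2 < 1 by norm_num)
    refine ⟨n, le_of_lt ?_⟩
    rwa [zpow_neg, zpow_natCast, ← inv_pow, ← one_div]
  obtain ⟨n, hn, hminall⟩ : ∃ n : ℕ, (2:ℝ)^(-(n:ℤ)) ≤ rj ∧
      ∀ m < n, ¬ (2:ℝ)^(-(m:ℤ)) ≤ rj :=
    ⟨Nat.find hex, Nat.find_spec hex, fun m hm => Nat.find_min hex hm⟩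
  have hn0 : n ≠ 0 := by
    intro h
    rw [h] at hn
    norm_num at hn
    linarith
  have hmin : ¬ (2:ℝ)^(-((n-1:ℕ):ℤ)) ≤ rj :=
    hminall _ (Nat.sub_lt (Nat.pos_of_ne_zero hn0) one_pos)
  have h2 : rj < 2 * (2:ℝ)^(-(n:ℤ)) := by
    push_neg at hmin
    have hcast : (-((n-1:ℕ):ℤ)) = 1 + -(n:ℤ) := by
      have : (1:ℕ) ≤ n := Nat.one_le_iff_ne_zero.2 hn0
      push_cast [Nat.cast_sub this]
      ring
    rwa [hcast, zpow_add₀ (by norm_num : (2:ℝ) ≠ 0), zpow_one] at hmin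
  set w : ℝ := (2:ℝ)^(-(n:ℤ)) with hw_def
  have hwpos : 0 < w := by positivity
  set c : ℝ := rj⁻¹ * w with hc_def
  have hc1 : c ≤ 1 := by
    have := mul_le_mul_of_nonneg_left hn (inv_nonneg.2 hrj.le)
    rwa [inv_mul_cancel₀ hrj.ne'] at this
  have hc2 : 1/2 < c := by
    rw [hc_def, inv_mul_eq_div, lt_div_iff₀ hrj]
    linarith
  set a : lp (fun _ : ℕ => ℝ) ⊤ := lp.single ⊤ n c with ha_def
  have haE : a ∈ rj⁻¹ • Eset := by
    refine ⟨lp.single ⊤ n w, Or.inr ⟨n, rfl⟩, ?_⟩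
    show rj⁻¹ • lp.single ⊤ n w = a
    rw [ha_def, hc_def, ← smul_eq_mul, lp.single_smul]
  have haball : a ∈ Metric.closedBall (0 : lp (fun _ : ℕ => ℝ) ⊤) 1 := by
    rw [Metric.mem_closedBall, dist_zero_right]
    refine (norm_single_le n c).trans ?_
    rw [abs_of_pos (by linarith)]
    exact hc1
  have han : a n = c := by rw [ha_def]; exact lp.single_apply_self (E := fun _ : ℕ => ℝ) ⊤ n c
  -- distance lower bound for each point of ri⁻¹ • Eset
  have hdistlb : ∀ b ∈ ri⁻¹ • Eset, (1:ℝ)/2 ≤ dist a b := by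
    rintro _ ⟨y, hy, rfl⟩
    rcases hy with rfl | ⟨m, rfl⟩
    · beta_reduce
      rw [smul_zero, dist_zero_right]
      have := coord_le a n
      rw [han] at this
      have : c ≤ ‖a‖ := le_trans (le_abs_self c) this
      linarith
    · beta_reduce
      set b : lp (fun _ : ℕ => ℝ) ⊤ := ri⁻¹ • lp.single ⊤ m ((2:ℝ)^(-(m:ℤ))) with hb_def
      have hbn : b n = ri⁻¹ * (lp.single ⊤ m ((2:ℝ)^(-(m:ℤ))) : lp (fun _ : ℕ => ℝ) ⊤) n := by
        rw [lp.coeFn_smul, Pi.smul_apply, smul_eq_mul]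
      have key := coord_le_dist a b n
      by_cases hmn : m = n
      · subst hmn
        rw [lp.single_apply_self] at hbn
        have hinv : 4 * rj⁻¹ < ri⁻¹ := by
          have h4 : 0 < rj / 4 := by linarith
          have := (inv_lt_inv₀ h4 hri).2 hrirj
          rwa [inv_div, div_eq_mul_inv] at this
        have h5 : 4 * c < ri⁻¹ * w := by
          rw [hc_def]
          nlinarith [mul_lt_mul_of_pos_right hinv hwpos]
        rw [han, hbn] at key
        have habs : ri⁻¹ * w - c ≤ |c - ri⁻¹ * w| := by
          rw [abs_sub_comm]; exact le_abs_self _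
        linarith
      · have hne : (lp.single ⊤ m ((2:ℝ)^(-(m:ℤ))) : lp (fun _ : ℕ => ℝ) ⊤) n = 0 :=
          lp.single_apply_ne ⊤ m _ (fun h => hmn h.symm)
        rw [hne, mul_zero] at hbn
        rw [han, hbn, sub_zero] at key
        have : c ≤ |c| := le_abs_self c
        linarith
  refine le_trans ?_ (le_exc ⟨haE, haball⟩)
  refine le_iInf fun b => le_iInf fun hb => ?_
  rw [edist_dist]
  exact ENNReal.ofReal_le_ofReal (hdistlb b hb)

/-- The set `E = {0} ∪ {2⁻ⁿ eₙ} ⊂ ℓ∞` is compact, satisfies the excess lower bound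
`ex((rⱼ⁻¹E) ∩ B̄(0,1), rᵢ⁻¹E) ≥ 1/2` whenever `0 < rⱼ < 1` and `0 < rᵢ < rⱼ/4`, and has no
Attouch-Wets tangent at `0`: for every sequence of positive scales `rⱼ → 0`, no subsequence of
the sets `rⱼ⁻¹E` converges in the Attouch-Wets sense. -/
theorem stmt11 :
    IsCompact Eset ∧
    (∀ ri rj : ℝ, 0 < ri → 0 < rj → rj < 1 → ri < rj / 4 →
      ENNReal.ofReal (1 / 2) ≤
        exc ((rj⁻¹ • Eset) ∩ Metric.closedBall (0 : lp (fun _ : ℕ => ℝ) ⊤) 1)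
          (ri⁻¹ • Eset)) ∧
    (∀ r : ℕ → ℝ, (∀ j, 0 < r j) → Tendsto r atTop (nhds 0) →
      ¬ ∃ (φ : ℕ → ℕ) (T : Set (lp (fun _ : ℕ => ℝ) ⊤)), StrictMono φ ∧
        IsClosed T ∧ T.Nonempty ∧
        ∀ R : ℝ, 0 < R →
          Tendsto (fun k => WW (0 : lp (fun _ : ℕ => ℝ) ⊤) R ((r (φ k))⁻¹ • Eset) T)
            atTop (nhds 0)) := by
  refine ⟨?_, fun ri rj hri hrj hrj1 hrirj => excLower ri rj hri hrj hrj1 hrirj, ?_⟩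
  · -- compactness
    have hf : Tendsto (fun n : ℕ => (lp.single ⊤ n ((2:ℝ)^(-(n:ℤ))) : lp (fun _ : ℕ => ℝ) ⊤))
        atTop (nhds 0) := by
      rw [tendsto_zero_iff_norm_tendsto_zero]
      refine squeeze_zero (g := fun n : ℕ => ((1:ℝ)/2)^n) (fun n => norm_nonneg _)
        (fun n => (norm_single_le n _).trans_eq ?_) ?_
      · rw [abs_of_pos (by positivity), zpow_neg, zpow_natCast, ← inv_pow, ← one_div]
      · exact tendsto_pow_atTop_nhds_zero_of_lt_one (by norm_num) (by norm_num)
    exact hf.isCompact_insert_range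
  · -- no Attouch-Wets tangent
    rintro r hrpos hr0 ⟨φ, T, hφ, _hTcl, _hTne, hconv⟩
    have hs0 : Tendsto (fun k => r (φ k)) atTop (nhds 0) := hr0.comp hφ.tendsto_atTop
    have F1 : ∀ᶠ k in atTop,
        WW (0 : lp (fun _ : ℕ => ℝ) ⊤) 1 ((r (φ k))⁻¹ • Eset) T < ENNReal.ofReal (1/16) :=
      (hconv 1 one_pos).eventually (gt_mem_nhds (ENNReal.ofReal_pos.2 (by norm_num)))
    have F2 : ∀ᶠ k in atTop,
        WW (0 : lp (fun _ : ℕ => ℝ) ⊤) 2 ((r (φ k))⁻¹ • Eset) T < ENNReal.ofReal (1/16) :=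
      (hconv 2 two_pos).eventually (gt_mem_nhds (ENNReal.ofReal_pos.2 (by norm_num)))
    have G1 : ∀ᶠ k in atTop, r (φ k) < 1 := hs0.eventually (gt_mem_nhds one_pos)
    obtain ⟨k, hk1, hk2⟩ := (F1.and G1).exists
    have G2 : ∀ᶠ l in atTop, r (φ l) < r (φ k) / 4 :=
      hs0.eventually (gt_mem_nhds (div_pos (hrpos (φ k)) (by norm_num)))
    obtain ⟨l, hl1, hl2⟩ := (F2.and G2).exists
    -- bound exc(A ∩ B̄1, T)
    have e1 : exc (((r (φ k))⁻¹ • Eset) ∩ closedBall (0 : lp (fun _ : ℕ => ℝ) ⊤) 1) T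
        < ENNReal.ofReal (1/8) := by
      have hle := (exc_le_WW (0 : lp (fun _ : ℕ => ℝ) ⊤) one_pos ((r (φ k))⁻¹ • Eset) T).1
      rw [ENNReal.ofReal_one, one_mul] at hle
      refine lt_of_le_of_lt (hle.trans hk1.le) ?_
      exact ENNReal.ofReal_lt_ofReal_iff (by norm_num) |>.2 (by norm_num)
    -- bound exc(T ∩ B̄2, B)
    have e2 : exc (T ∩ closedBall (0 : lp (fun _ : ℕ => ℝ) ⊤) 2) ((r (φ l))⁻¹ • Eset)
        ≤ ENNReal.ofReal (1/8) := by
      have hle := (exc_le_WW (0 : lp (fun _ : ℕ => ℝ) ⊤) two_pos ((r (φ l))⁻¹ • Eset) T).2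
      refine hle.trans ?_
      calc ENNReal.ofReal 2 * WW (0 : lp (fun _ : ℕ => ℝ) ⊤) 2 ((r (φ l))⁻¹ • Eset) T
          ≤ ENNReal.ofReal 2 * ENNReal.ofReal (1/16) := mul_le_mul_right hl1.le _
        _ = ENNReal.ofReal (1/8) := by
            rw [← ENNReal.ofReal_mul (by norm_num)]; norm_num
    have key := exc_step (((r (φ k))⁻¹ • Eset) ∩ closedBall (0 : lp (fun _ : ℕ => ℝ) ⊤) 1)
      ((r (φ l))⁻¹ • Eset) T 0 inter_subset_right e1
    have low := excLower (r (φ l)) (r (φ k)) (hrpos _) (hrpos _) hk2 hl2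
    have hcontr : ENNReal.ofReal (1/2) ≤ ENNReal.ofReal (1/8) + ENNReal.ofReal (1/8) :=
      low.trans (key.trans (add_le_add_right e2 _))
    rw [← ENNReal.ofReal_add (by norm_num) (by norm_num)] at hcontr
    have := (ENNReal.ofReal_le_ofReal_iff (by norm_num)).1 hcontr
    norm_num at this
end

section
/- Let (X,x) and (Y,y) be separable pointed metric spaces with (Y,y) a metric cone, and let ε, r > 0. If ξ_{X,Y}(x, y, r/ε) < ε², then D_GH^{1/(2ε)}[(r^{-1}X, x), (Y, y)] < 4ε². -/
/-!
An `e·(r/ε)`-approximation `φ : B(x, r/ε) → Y` with `e < ε²` distorts distances by at most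
`c = e·r/ε`. Glue `X` to `Y` along `φ`, at distance `c` between `w` and `φ w`, and then identify
`x` with `φ x = y`. Pulling the `Y`-side back along the cone similarity of ratio `r` and dividing
all distances by `r` gives a pseudometric on `X ⊕ Y` admissible for `D_GH` of `(r⁻¹X, x)` and
`(Y, y)`. In it the two copies are `(e/ε + ε)`-close inside the ball of radius `1/(2ε)`, the
`Y`-to-`X` direction using that `φ` is `c`-dense and `c < rε`. Hence
`D_GH ≤ 2ε(e/ε + ε) = 2e + 2ε² < 4ε²`.
-/

open Metric Set Filter
open scoped ENNReal NNReal

/-- `(Y,y)` is a metric cone: every point lies on a geodesic ray from `y` isometric to `[0,∞)`,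
and for every `λ > 0` there is a pointed bijection of `Y` scaling all distances by `λ`. -/
def IsMetricCone {Y : Type*} [MetricSpace Y] (y : Y) : Prop :=
  (∀ u : Y, ∃ f : ℝ≥0 → Y, Isometry f ∧ f 0 = y ∧ u ∈ Set.range f) ∧
  (∀ lam : ℝ, 0 < lam → ∃ ψ : Y → Y, Function.Bijective ψ ∧ ψ y = y ∧
    ∀ u v : Y, dist (ψ u) (ψ v) = lam * dist u v)

/-- `ξ_{X,Y}(x,y,R)`: the infimum of `ε > 0` such that there is a pointed
`εR`-Gromov-Hausdorff approximation from `(B_X(x,R),x)` to `(B_Y(y,R),y)`. -/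
noncomputable def xi {X Y : Type*} [MetricSpace X] [MetricSpace Y]
    (x : X) (y : Y) (R : ℝ) : ℝ :=
  sInf {ε : ℝ | 0 < ε ∧ ∃ φ : X → Y, φ x = y ∧
    Set.MapsTo φ (Metric.closedBall x R) (Metric.closedBall y R) ∧
    (∀ w ∈ Metric.closedBall x R, ∀ v ∈ Metric.closedBall x R,
      |dist (φ w) (φ v) - dist w v| ≤ ε * R) ∧
    (∀ u ∈ Metric.closedBall y R, Metric.infDist u (φ '' Metric.closedBall x R) ≤ ε * R)}

/-- `D_GH^R[(s·X,x),(Y,y)]`: the Gromov-Hausdorff version of the relative Walkup-Wets distance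
between the `s`-rescaled space `X` and `Y`, with basepoints `x` and `y`: the infimum over all
pseudometrics on `X ⊕ Y` restricting to `s · d_X` on `X` and to `d_Y` on `Y` and identifying
the basepoints, of the relative Walkup-Wets distance of the two copies in the ball of radius
`R` around the common basepoint. -/
noncomputable def DGHs {X Y : Type*} [MetricSpace X] [MetricSpace Y]
    (s : ℝ) (x : X) (y : Y) (R : ℝ) : ℝ≥0∞ :=
  ⨅ (m : PseudoMetricSpace (X ⊕ Y)),
    letI := m
    ⨅ (_ : ∀ u v : X, dist (Sum.inl u : X ⊕ Y) (Sum.inl v) = s * dist u v)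
      (_ : ∀ u v : Y, dist (Sum.inr u : X ⊕ Y) (Sum.inr v) = dist u v)
      (_ : dist (Sum.inl x : X ⊕ Y) (Sum.inr y) = 0),
      WW (Sum.inl x : X ⊕ Y) R (Set.range Sum.inl) (Set.range Sum.inr)

theorem min_choice₃ {α : Type*} [LinearOrder α] (a b c : α) :
    min a (min b c) = a ∨ min a (min b c) = b ∨ min a (min b c) = c := by
  rcases min_choice a (min b c) with h | h
  · exact .inl h
  · rw [h]; exact .inr (min_choice b c)

namespace PseudoMetricSpace

variable {T : Type*}

/-- The quotient pseudometric identifying `a` with `b`: a path may jump once between `a` and `b`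
at no cost. -/
@[reducible] def identifyPoints [PseudoMetricSpace T] (a b : T) : PseudoMetricSpace T where
  dist p q := min (dist p q) (min (dist p a + dist b q) (dist p b + dist a q))
  dist_self p := le_antisymm ((min_le_left _ _).trans_eq (dist_self p)) <|
    le_min dist_nonneg (le_min (by positivity) (by positivity))
  dist_comm p q := by
    rw [dist_comm p q, min_comm (dist p a + _), dist_comm p a, dist_comm b q, dist_comm p b,
      dist_comm a q, add_comm (dist a p), add_comm (dist b p)]
  dist_triangle p q r := by
    have le₁ := min_le_left (dist p r) (min (dist p a + dist b r) (dist p b + dist a r))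
    have le₂ := (min_le_right (dist p r) _).trans
      (min_le_left (dist p a + dist b r) (dist p b + dist a r))
    have le₃ := (min_le_right (dist p r) _).trans
      (min_le_right (dist p a + dist b r) (dist p b + dist a r))
    rcases min_choice₃ (dist p q) (dist p a + dist b q) (dist p b + dist a q) with h₁ | h₁ | h₁ <;>
      rcases min_choice₃ (dist q r) (dist q a + dist b r) (dist q b + dist a r)
        with h₂ | h₂ | h₂ <;>
      rw [h₁, h₂] <;>
      linarith [dist_triangle p q r, dist_triangle p q a, dist_triangle p q b,
        dist_triangle a q r, dist_triangle b q r, dist_triangle p a r, dist_triangle p b r,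
        dist_comm q a, dist_comm q b, dist_nonneg (x := a) (y := q), dist_nonneg (x := b) (y := q)]

section identifyPoints

variable [PseudoMetricSpace T] (a b : T) {p q : T}

theorem identifyPoints_dist_le : (identifyPoints a b).dist p q ≤ dist p q := min_le_left _ _

theorem identifyPoints_dist_eq_zero : (identifyPoints a b).dist a b = 0 :=
  le_antisymm ((min_le_right _ _).trans <| (min_le_left _ _).trans_eq <| by simp) <|
    le_min dist_nonneg (le_min (by positivity) (by positivity))

theorem identifyPoints_dist_of_le_left (hp : dist p a ≤ dist p b) (hq : dist q a ≤ dist q b) :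
    (identifyPoints a b).dist p q = dist p q := by
  refine le_antisymm (identifyPoints_dist_le a b) (le_min le_rfl (le_min ?_ ?_))
  · linarith [dist_triangle p a q, dist_comm q a, dist_comm q b]
  · linarith [dist_triangle p a q]

theorem identifyPoints_dist_of_le_right (hp : dist p b ≤ dist p a) (hq : dist q b ≤ dist q a) :
    (identifyPoints a b).dist p q = dist p q := by
  refine le_antisymm (identifyPoints_dist_le a b) (le_min le_rfl (le_min ?_ ?_))
  · linarith [dist_triangle p b q]
  · linarith [dist_triangle p b q, dist_comm q a, dist_comm q b]

end identifyPoints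

@[reducible] def scaledInduced {M : Type*} [PseudoMetricSpace M] (k : ℝ) (hk : 0 ≤ k)
    (f : T → M) : PseudoMetricSpace T where
  dist p q := k * dist (f p) (f q)
  dist_self p := by simp
  dist_comm p q := by rw [dist_comm]
  dist_triangle p q r := by
    rw [← mul_add]; exact mul_le_mul_of_nonneg_left (dist_triangle _ _ _) hk

theorem scaledInduced_dist {M : Type*} [PseudoMetricSpace M] (k : ℝ) (hk : 0 ≤ k) (f : T → M)
    (p q : T) : (scaledInduced k hk f).dist p q = k * dist (f p) (f q) := rfl

end PseudoMetricSpace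

open Sum

namespace Metric

variable {X Y Z : Type*} [MetricSpace X] [MetricSpace Y]

theorem dist_le_glueDist_inl_inr (Φ : Z → X) (Ψ : Z → Y) {ε : ℝ}
    (H : ∀ p q, dist (Φ p) (Φ q) ≤ dist (Ψ p) (Ψ q) + ε) (p₀ : Z) (u : X) :
    dist u (Φ p₀) ≤ glueDist Φ Ψ ε (inl u) (inr (Ψ p₀)) := by
  have : Nonempty Z := ⟨p₀⟩
  simp only [glueDist]
  rw [← sub_le_iff_le_add]
  refine le_ciInf fun p => ?_
  linarith [dist_triangle u (Φ p) (Φ p₀), H p p₀, dist_comm (Ψ p) (Ψ p₀)]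

theorem dist_le_glueDist_inr_inl (Φ : Z → X) (Ψ : Z → Y) {ε : ℝ}
    (H : ∀ p q, dist (Ψ p) (Ψ q) ≤ dist (Φ p) (Φ q) + ε) (p₀ : Z) (v : Y) :
    dist v (Ψ p₀) ≤ glueDist Φ Ψ ε (inr v) (inl (Φ p₀)) := by
  have : Nonempty Z := ⟨p₀⟩
  simp only [glueDist]
  rw [← sub_le_iff_le_add]
  refine le_ciInf fun p => ?_
  linarith [dist_triangle v (Ψ p) (Ψ p₀), H p p₀, dist_comm (Φ p) (Φ p₀)]

theorem exists_pseudoMetricSpace_sum_glue {S : Set X} {x : X} (hx : x ∈ S) {φ : X → Y} {c : ℝ}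
    (hc : 0 < c) (hφ : ∀ w ∈ S, ∀ w' ∈ S, |dist (φ w) (φ w') - dist w w'| ≤ c) :
    ∃ m : PseudoMetricSpace (X ⊕ Y),
      (∀ u v : X, m.dist (inl u) (inl v) = dist u v) ∧
      (∀ u v : Y, m.dist (inr u) (inr v) = dist u v) ∧
      m.dist (inl x) (inr (φ x)) = 0 ∧
      ∀ w ∈ S, ∀ v : Y, m.dist (inl w) (inr v) ≤ c + dist (φ w) v := by
  have : Nonempty S := ⟨⟨x, hx⟩⟩
  let Φ : S → X := Subtype.val
  let Ψ : S → Y := φ ∘ Subtype.val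
  have H (p q : S) : |dist (Φ p) (Φ q) - dist (Ψ p) (Ψ q)| ≤ c := by
    rw [abs_sub_comm]; exact hφ p p.2 q q.2
  let M := glueMetricApprox Φ Ψ c hc fun p q => (H p q).trans (by linarith)
  -- In the glued space `x` and `φ x` lie between the two sides, so identifying them changes
  -- no distance within `X` or within `Y`.
  have hX (u : X) : dist u x ≤ glueDist Φ Ψ c (inl u) (inr (φ x)) :=
    dist_le_glueDist_inl_inr Φ Ψ (fun p q => by linarith [abs_le.1 (H p q)]) ⟨x, hx⟩ u
  have hY (v : Y) : dist v (φ x) ≤ glueDist Φ Ψ c (inr v) (inl x) :=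
    dist_le_glueDist_inr_inl Φ Ψ (fun p q => by linarith [abs_le.1 (H p q)]) ⟨x, hx⟩ v
  refine ⟨M.identifyPoints (inl x) (inr (φ x)), fun u v => ?_, fun u v => ?_,
    PseudoMetricSpace.identifyPoints_dist_eq_zero _ _, fun w hw v => ?_⟩
  · exact PseudoMetricSpace.identifyPoints_dist_of_le_left _ _ (hX u) (hX v)
  · exact PseudoMetricSpace.identifyPoints_dist_of_le_right _ _ (hY u) (hY v)
  · calc (M.identifyPoints (inl x) (inr (φ x))).dist (inl w) (inr v)
        ≤ M.dist (inl w) (inr (φ w)) + M.dist (inr (φ w)) (inr v) :=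
          (PseudoMetricSpace.identifyPoints_dist_le _ _).trans (dist_triangle _ _ _)
      _ = c + dist (φ w) v := by
          rw [show M.dist (inl w) (inr (φ w)) = c from glueDist_glued_points Φ Ψ c ⟨w, hw⟩]
          rfl

end Metric

section WalkupWets

variable {T : Type*} [PseudoMetricSpace T]

theorem exc_le_ofReal {A B : Set T} {t : ℝ} (h : ∀ a ∈ A, ∃ b ∈ B, dist a b ≤ t) :
    exc A B ≤ ENNReal.ofReal t :=
  iSup₂_le fun a ha =>
    let ⟨b, hb, hab⟩ := h a ha
    (iInf₂_le b hb).trans (edist_dist a b ▸ ENNReal.ofReal_le_ofReal hab)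

theorem WW_le_ofReal {z : T} {ρ t : ℝ} (hρ : 0 < ρ) {A B : Set T}
    (hA : ∀ a ∈ A, dist a z ≤ ρ → ∃ b ∈ B, dist a b ≤ t)
    (hB : ∀ b ∈ B, dist b z ≤ ρ → ∃ a ∈ A, dist b a ≤ t) :
    WW z ρ A B ≤ ENNReal.ofReal (t / ρ) := by
  rw [WW, div_eq_inv_mul, ← ENNReal.ofReal_inv_of_pos hρ, ENNReal.ofReal_mul (inv_nonneg.2 hρ.le)]
  gcongr
  exact max_le (exc_le_ofReal fun a ha => hA a ha.1 ha.2)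
    (exc_le_ofReal fun b hb => hB b hb.1 hb.2)

end WalkupWets

theorem DGHs_le_of_pseudoMetricSpace {X Y : Type*} [MetricSpace X] [MetricSpace Y]
    {s ρ t : ℝ} {x : X} {y : Y} (hρ : 0 < ρ) (m : PseudoMetricSpace (X ⊕ Y))
    (hX : ∀ u v : X, m.dist (inl u) (inl v) = s * dist u v)
    (hY : ∀ u v : Y, m.dist (inr u) (inr v) = dist u v)
    (hxy : m.dist (inl x) (inr y) = 0)
    (hXY : ∀ u : X, s * dist u x ≤ ρ → ∃ v : Y, m.dist (inl u) (inr v) ≤ t)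
    (hYX : ∀ v : Y, dist v y ≤ ρ → ∃ u : X, m.dist (inr v) (inl u) ≤ t) :
    DGHs s x y ρ ≤ ENNReal.ofReal (t / ρ) := by
  let _ := m
  refine (iInf_le_of_le m <| iInf_le_of_le hX <| iInf_le_of_le hY <|
    iInf_le_of_le hxy le_rfl).trans (WW_le_ofReal hρ ?_ ?_)
  · rintro _ ⟨u, rfl⟩ hu
    obtain ⟨v, hv⟩ := hXY u ((hX u x).symm.trans_le hu)
    exact ⟨inr v, mem_range_self v, hv⟩
  · rintro _ ⟨v, rfl⟩ hv
    have : dist v y ≤ ρ := by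
      linarith [hY v y, dist_triangle (inr v : X ⊕ Y) (inl x) (inr y)]
    obtain ⟨u, hu⟩ := hYX v this
    exact ⟨inl u, mem_range_self u, hu⟩

theorem exists_pGHA_of_xi_lt {X Y : Type*} [MetricSpace X] [MetricSpace Y] {x : X} {y : Y}
    {R t : ℝ} (hR : 0 ≤ R) (h : xi x y R < t) :
    ∃ e, 0 < e ∧ e < t ∧ ∃ φ : X → Y, φ x = y ∧
      MapsTo φ (closedBall x R) (closedBall y R) ∧
      (∀ w ∈ closedBall x R, ∀ v ∈ closedBall x R, |dist (φ w) (φ v) - dist w v| ≤ e * R) ∧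
      ∀ u ∈ closedBall y R, infDist u (φ '' closedBall x R) ≤ e * R := by
  refine (exists_lt_of_csInf_lt ?_ h).imp fun e ⟨⟨he, φ⟩, het⟩ => ⟨he, het, φ⟩
  refine ⟨2, two_pos, fun _ => y, rfl, fun _ _ => mem_closedBall_self hR, fun w hw v hv => ?_,
    fun u hu => ?_⟩
  · rw [dist_self, zero_sub, abs_neg, abs_of_nonneg dist_nonneg]
    linarith [dist_triangle_right w v x, mem_closedBall.1 hw, mem_closedBall.1 hv]
  · refine (infDist_le_dist_of_mem (mem_image_of_mem _ (mem_closedBall_self hR))).trans ?_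
    linarith [mem_closedBall.1 hu]

theorem DGHs_inv_le_of_pGHA {X Y : Type*} [MetricSpace X] [MetricSpace Y] {x : X} {y : Y}
    {r R ρ c t : ℝ} (hr : 0 < r) (hc : 0 < c) (hρ : 0 < ρ) (hρR : r * ρ ≤ R)
    {χ : Y → Y} (hχ : Function.Surjective χ) (hχy : χ y = y)
    (hχdist : ∀ u v, dist (χ u) (χ v) = r * dist u v) {φ : X → Y} (hφx : φ x = y)
    (hφ : ∀ w ∈ closedBall x R, ∀ v ∈ closedBall x R, |dist (φ w) (φ v) - dist w v| ≤ c)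
    (hφcover : ∀ u ∈ closedBall y R, infDist u (φ '' closedBall x R) < t) :
    DGHs r⁻¹ x y ρ ≤ ENNReal.ofReal ((c + t) / r / ρ) := by
  have hR : 0 ≤ R := (by positivity : 0 ≤ r * ρ).trans hρR
  have hx : x ∈ closedBall x R := mem_closedBall_self hR
  obtain ⟨m, hmX, hmY, hmxy, hmXY⟩ := Metric.exists_pseudoMetricSpace_sum_glue hx hc hφ
  let m' := m.scaledInduced r⁻¹ (inv_nonneg.2 hr.le) (Sum.map id χ)
  have ht : 0 ≤ t := infDist_nonneg.trans (hφcover y (mem_closedBall_self hR)).le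
  refine DGHs_le_of_pseudoMetricSpace hρ m' (fun u v => ?_) (fun u v => ?_) ?_
    (fun u hu => ?_) (fun v hv => ?_) <;>
    simp only [m', PseudoMetricSpace.scaledInduced_dist, Sum.map_inl, Sum.map_inr, id]
  · rw [hmX]
  · rw [hmY, hχdist, inv_mul_cancel_left₀ hr.ne']
  · rw [hχy, ← hφx, hmxy, mul_zero]
  · obtain ⟨v, hv⟩ := hχ (φ u)
    refine ⟨v, ?_⟩
    have hu' : u ∈ closedBall x R := mem_closedBall.2 (((inv_mul_le_iff₀ hr).1 hu).trans hρR)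
    rw [hv, div_eq_inv_mul]
    gcongr
    linarith [hmXY u hu' (φ u), dist_self (φ u)]
  · have hv' : χ v ∈ closedBall y R := by
      rw [mem_closedBall, ← hχy, hχdist]
      exact (mul_le_mul_of_nonneg_left hv hr.le).trans hρR
    obtain ⟨_, ⟨w, hw, rfl⟩, hwv⟩ :=
      (infDist_lt_iff ⟨φ x, mem_image_of_mem φ hx⟩).1 (hφcover (χ v) hv')
    refine ⟨w, ?_⟩
    rw [m.dist_comm, div_eq_inv_mul]
    gcongr
    linarith [hmXY w hw (χ v), dist_comm (φ w) (χ v)]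

theorem stmt13_general {X Y : Type*} [MetricSpace X] [MetricSpace Y]
    (x : X) (y : Y) (hcone : IsMetricCone y) (ε r : ℝ) (hε : 0 < ε) (hr : 0 < r)
    (h : xi x y (r / ε) < ε ^ 2) :
    DGHs r⁻¹ x y (1 / (2 * ε)) < ENNReal.ofReal (4 * ε ^ 2) := by
  obtain ⟨e, he, heε, φ, hφx, -, hφ, hφcover⟩ := exists_pGHA_of_xi_lt (by positivity) h
  obtain ⟨χ, hχ, hχy, hχdist⟩ := hcone.2 r hr
  have hρR : r * (1 / (2 * ε)) ≤ r / ε := by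
    rw [mul_one_div]; exact div_le_div_of_nonneg_left hr.le hε (by linarith)
  have hcover (u) (hu : u ∈ closedBall y (r / ε)) :
      infDist u (φ '' closedBall x (r / ε)) < r * ε :=
    calc _ ≤ e * (r / ε) := hφcover u hu
      _ < ε ^ 2 * (r / ε) := by gcongr
      _ = r * ε := by field_simp
  refine (DGHs_inv_le_of_pGHA hr (by positivity) (by positivity) hρR hχ.2 hχy hχdist hφx hφ
    hcover).trans_lt ?_
  rw [ENNReal.ofReal_lt_ofReal_iff (by positivity)]
  have : (e * (r / ε) + r * ε) / r / (1 / (2 * ε)) = 2 * e + 2 * ε ^ 2 := by field_simp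
  linarith

/-- If `(Y,y)` is a metric cone and `ξ_{X,Y}(x,y,r/ε) < ε²`,
then `D_GH^{1/(2ε)}[(r⁻¹X,x),(Y,y)] < 4ε²`. -/
theorem stmt13 {X Y : Type*} [MetricSpace X] [MetricSpace Y]
    [TopologicalSpace.SeparableSpace X] [TopologicalSpace.SeparableSpace Y]
    (x : X) (y : Y) (hcone : IsMetricCone y) (ε r : ℝ) (hε : 0 < ε) (hr : 0 < r)
    (h : xi x y (r / ε) < ε ^ 2) :
    DGHs r⁻¹ x y (1 / (2 * ε)) < ENNReal.ofReal (4 * ε ^ 2) :=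
  stmt13_general x y hcone ε r hε hr h
end

section
/- Let X be a metric space, s > 0, and let F ⊆ X be s-expansive in X (in particular 0 < ℋ^s(F) < ∞). Suppose furthermore that the lower s-density Θ^s_*(F,x) = liminf_{r→0} ℋ^s(F∩B(x,r))/(2r)^s is positive for ℋ^s-a.e. x ∈ F. Then X does not have finite s-packing content, i.e., for every M > 0 there exists a countable family of mutually disjoint closed balls B_i in X centered in X with radii r(B_i) ≤ diam X and ∑_i r(B_i)^s ≥ M. -/
open Metric Set Filter
open scoped ENNReal NNReal

open MeasureTheory


section Helpers

variable {X : Type*} [MetricSpace X] [MeasurableSpace X] [BorelSpace X]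

/-- The uniform gap property with parameter `b`. -/
def GapP (s : ℝ) (F : Set X) (x : X) (b : ℝ) : Prop :=
  ∀ ρ' : ℝ, 0 < ρ' → ∀ ε : ℝ≥0∞, 0 < ε → ∃ r y, 0 < r ∧ r ≤ ρ' ∧
    Metric.closedBall y (2*b*r) ⊆ Metric.closedBall x r ∧ 2*b*r ≤ dist x y ∧
    μH[s] (F ∩ Metric.closedBall y (2*b*r)) ≤ ε * ENNReal.ofReal (r^s)

lemma vitali_pack (s : ℝ) (F A : Set X) (hFmeas : MeasurableSet F)
    (hF1 : μH[s] F ≠ ⊤) (rf : X → ℝ) (δ : ℝ)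
    (h1 : ∀ x ∈ A, 0 < rf x ∧ rf x ≤ δ)
    (hpos : ∀ x ∈ A, 0 < μH[s] (F ∩ closedBall x (rf x))) :
    ∃ u : Set X, u ⊆ A ∧ u.Countable ∧
      (u.PairwiseDisjoint fun b => closedBall b (rf b)) ∧
      A ⊆ ⋃ b ∈ u, closedBall b (5 * rf b) := by
  obtain ⟨u, huA, hdisj, hcov⟩ :=
    Vitali.exists_disjoint_subfamily_covering_enlargement_closedBall A id rf δ
      (fun x hx => (h1 x hx).2) 4 (by norm_num)
  refine ⟨u, huA, ?_, hdisj, ?_⟩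
  · -- countability from disjointness and positive measure
    have hmeas : ∀ i : u, MeasurableSet (F ∩ closedBall (i : X) (rf i)) :=
      fun i => hFmeas.inter measurableSet_closedBall
    have hdisj' : Pairwise (Function.onFun Disjoint fun i : u => F ∩ closedBall (i : X) (rf i)) := by
      intro i j hij
      have : Disjoint (closedBall (i : X) (rf i)) (closedBall (j : X) (rf j)) :=
        hdisj i.2 j.2 (fun h => hij (Subtype.ext h))
      exact this.mono inter_subset_right inter_subset_right
    have hfin : μH[s] (⋃ i : u, F ∩ closedBall (i : X) (rf i)) ≠ ⊤ := by
      refine ne_top_of_le_ne_top hF1 (measure_mono ?_)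
      exact iUnion_subset fun i => inter_subset_left
    have := MeasureTheory.Measure.countable_meas_pos_of_disjoint_of_meas_iUnion_ne_top
      (μH[s]) hmeas hdisj' hfin
    have hall : {i : u | 0 < μH[s] (F ∩ closedBall (i : X) (rf i))} = univ := by
      ext i; simp [hpos i (huA i.2)]
    rw [hall] at this
    rw [← Set.countable_coe_iff]
    exact countable_univ_iff.mp this
  · intro x hx
    obtain ⟨b, hbu, hsub⟩ := hcov x hx
    have hb0 : 0 ≤ rf b := (h1 b (huA hbu)).1.le
    refine mem_biUnion hbu ?_
    have : x ∈ closedBall x (rf x) := mem_closedBall_self (h1 x hx).1.le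
    exact closedBall_subset_closedBall (by linarith) (hsub this)


lemma meas_le_of_covers (s : ℝ) (hs : 0 < s) (A : Set X) (C : ℝ≥0∞)
    (h : ∀ n : ℕ, ∃ (u : Set X) (rf : X → ℝ), u.Countable ∧
      (∀ b ∈ u, 0 < rf b ∧ rf b ≤ 1 / (n + 1)) ∧
      (A ⊆ ⋃ b ∈ u, closedBall b (5 * rf b)) ∧
      ∑' b : u, ENNReal.ofReal ((10 * rf b) ^ s) ≤ C) :
    μH[s] A ≤ C := by
  choose u rf hcount hr hcov hsum using h
  haveI : ∀ n : ℕ, Countable (u n) := fun n => (hcount n).to_subtype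
  have key := MeasureTheory.Measure.hausdorffMeasure_le_liminf_tsum (ι := fun n => ↥(u n)) s A
      (l := atTop) (fun n => ENNReal.ofReal (10 / (n + 1)))
      (by
        have h0 : Tendsto (fun n : ℕ => 10 / ((n : ℝ) + 1)) atTop (nhds 0) := by
          have := tendsto_one_div_add_atTop_nhds_zero_nat.const_mul (10 : ℝ)
          simpa [div_eq_mul_inv, mul_comm, mul_assoc, mul_left_comm] using this
        simpa using (ENNReal.tendsto_ofReal h0))
      (fun n i => closedBall (i : X) (5 * rf n i))
      (by
        filter_upwards with n i
        have h1 := hr n i i.2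
        have h5 : (0:ℝ) ≤ 5 * rf n i := by nlinarith [h1.1.le]
        calc EMetric.diam (closedBall (i : X) (5 * rf n i))
            ≤ 2 * ENNReal.ofReal (5 * rf n i) := by
              rw [← Metric.emetric_closedBall h5]
              exact EMetric.diam_closedBall
          _ = ENNReal.ofReal (10 * rf n i) := by
              rw [← ENNReal.ofReal_ofNat, ← ENNReal.ofReal_mul (by norm_num)]
              norm_num; ring_nf
          _ ≤ ENNReal.ofReal (10 / (n + 1)) := by
              apply ENNReal.ofReal_le_ofReal
              have := h1.2
              rw [div_eq_mul_inv] at this ⊢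
              nlinarith [h1.1.le]
        )
      (by
        filter_upwards with n
        intro x hx
        rcases mem_iUnion₂.1 (hcov n hx) with ⟨b, hb, hmem⟩
        exact mem_iUnion.2 ⟨⟨b, hb⟩, hmem⟩)
  refine key.trans ?_
  apply Filter.liminf_le_of_frequently_le'
  apply Filter.Frequently.of_forall
  intro n
  refine le_trans ?_ (hsum n)
  apply ENNReal.tsum_le_tsum
  intro i
  have h1 := hr n i i.2
  have h5 : (0:ℝ) ≤ 5 * rf n i := by nlinarith [h1.1.le]
  calc EMetric.diam (closedBall (i : X) (5 * rf n i)) ^ s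
      ≤ (ENNReal.ofReal (10 * rf n i)) ^ s := by
        apply ENNReal.rpow_le_rpow _ hs.le
        rw [← Metric.emetric_closedBall h5]
        refine EMetric.diam_closedBall.trans_eq ?_
        rw [← ENNReal.ofReal_ofNat, ← ENNReal.ofReal_mul (by norm_num)]
        norm_num; ring_nf
    _ = ENNReal.ofReal ((10 * rf n i) ^ s) :=
        ENNReal.ofReal_rpow_of_pos (by nlinarith [h1.1])


lemma bad_null (s : ℝ) (hs : 0 < s) (F : Set X) (hFmeas : MeasurableSet F)
    (hF1 : μH[s] F ≠ ⊤) :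
    μH[s] {x : X | ∀ t : ℕ, ∀ ρ : ℝ, 0 < ρ → ∃ r, 0 < r ∧ r ≤ ρ ∧
      ((t : ℝ≥0∞) + 1) * ENNReal.ofReal (r ^ s) < μH[s] (F ∩ closedBall x r)} = 0 := by
  set Bad := {x : X | ∀ t : ℕ, ∀ ρ : ℝ, 0 < ρ → ∃ r, 0 < r ∧ r ≤ ρ ∧
      ((t : ℝ≥0∞) + 1) * ENNReal.ofReal (r ^ s) < μH[s] (F ∩ closedBall x r)} with hBad
  set D : ℝ≥0∞ := ENNReal.ofReal (10 ^ s) * μH[s] F with hD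
  have hDtop : D ≠ ⊤ := by
    simp only [hD, Ne, ENNReal.mul_eq_top]
    push_neg
    exact ⟨fun _ => hF1, fun h => absurd h ENNReal.ofReal_ne_top⟩
  have key : ∀ t : ℕ, μH[s] Bad ≤ D / ((t : ℝ≥0∞) + 1) := by
    intro t
    apply meas_le_of_covers s hs
    intro n
    -- choose radii
    have hex : ∀ x ∈ Bad, ∃ r, 0 < r ∧ r ≤ 1 / ((n : ℝ) + 1) ∧
        ((t : ℝ≥0∞) + 1) * ENNReal.ofReal (r ^ s) < μH[s] (F ∩ closedBall x r) :=
      fun x hx => hx t (1 / ((n : ℝ) + 1)) (by positivity)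
    classical
    have hex' : ∀ x : X, ∃ r, x ∈ Bad → (0 < r ∧ r ≤ 1 / ((n : ℝ) + 1) ∧
        ((t : ℝ≥0∞) + 1) * ENNReal.ofReal (r ^ s) < μH[s] (F ∩ closedBall x r)) := by
      intro x
      by_cases hx : x ∈ Bad
      · obtain ⟨r, h⟩ := hex x hx; exact ⟨r, fun _ => h⟩
      · exact ⟨1, fun h => absurd h hx⟩
    choose rf hrf using hex'
    obtain ⟨u, huB, hucount, hudisj, hucov⟩ :=
      vitali_pack s F Bad hFmeas hF1 rf (1 / ((n : ℝ) + 1))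
        (fun x hx => ⟨(hrf x hx).1, (hrf x hx).2.1⟩)
        (fun x hx => lt_of_le_of_lt (zero_le) (hrf x hx).2.2)
    refine ⟨u, rf, hucount, fun b hb => ⟨(hrf b (huB hb)).1, (hrf b (huB hb)).2.1⟩, hucov, ?_⟩
    haveI : Countable u := hucount.to_subtype
    -- sum bound
    have hsum1 : ∑' b : u, μH[s] (F ∩ closedBall (b : X) (rf b)) ≤ μH[s] F := by
      rw [← measure_iUnion ?_ (fun i => hFmeas.inter measurableSet_closedBall)]
      · exact measure_mono (iUnion_subset fun i => inter_subset_left)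
      · intro i j hij
        have : Disjoint (closedBall (i : X) (rf i)) (closedBall (j : X) (rf j)) :=
          hudisj i.2 j.2 (fun h => hij (Subtype.ext h))
        exact this.mono inter_subset_right inter_subset_right
    have hsum2 : ∑' b : u, ENNReal.ofReal (rf b ^ s) ≤ μH[s] F / ((t : ℝ≥0∞) + 1) := by
      rw [ENNReal.le_div_iff_mul_le (Or.inl (by simp)) (Or.inl (by simp))]
      calc (∑' b : u, ENNReal.ofReal (rf b ^ s)) * ((t : ℝ≥0∞) + 1)
          = ∑' b : u, ((t : ℝ≥0∞) + 1) * ENNReal.ofReal (rf b ^ s) := by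
            rw [← ENNReal.tsum_mul_right]; congr 1; ext b; ring
        _ ≤ ∑' b : u, μH[s] (F ∩ closedBall (b : X) (rf b)) :=
            ENNReal.tsum_le_tsum fun b => (hrf b (huB b.2)).2.2.le
        _ ≤ μH[s] F := hsum1
    calc ∑' b : u, ENNReal.ofReal ((10 * rf b) ^ s)
        = ∑' b : u, ENNReal.ofReal (10 ^ s) * ENNReal.ofReal (rf b ^ s) := by
          congr 1; ext b
          rw [Real.mul_rpow (by norm_num) (hrf b (huB b.2)).1.le,
            ENNReal.ofReal_mul (Real.rpow_nonneg (by norm_num) s)]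
      _ = ENNReal.ofReal (10 ^ s) * ∑' b : u, ENNReal.ofReal (rf b ^ s) :=
          ENNReal.tsum_mul_left
      _ ≤ ENNReal.ofReal (10 ^ s) * (μH[s] F / ((t : ℝ≥0∞) + 1)) := by gcongr
      _ = D / ((t : ℝ≥0∞) + 1) := by
          rw [hD, mul_div_assoc]
  -- conclude μ Bad = 0
  by_contra h0
  have hBadtop : μH[s] Bad ≠ ⊤ := by
    refine ne_top_of_le_ne_top (ENNReal.div_lt_top hDtop one_ne_zero).ne ?_
    simpa using key 0
  obtain ⟨t, ht⟩ := ENNReal.exists_nat_gt (ENNReal.div_lt_top hDtop h0).ne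
  have h1 : D / ((t : ℝ≥0∞) + 1) < μH[s] Bad := by
    rw [ENNReal.div_lt_iff (Or.inl (by simp)) (Or.inl (by simp))]
    calc D = D / μH[s] Bad * μH[s] Bad := (ENNReal.div_mul_cancel h0 hBadtop).symm
      _ < (t : ℝ≥0∞) * μH[s] Bad := by
          rw [mul_comm (D / μH[s] Bad), mul_comm (t : ℝ≥0∞)]
          exact ENNReal.mul_lt_mul_right h0 hBadtop ht
      _ ≤ μH[s] Bad * ((t : ℝ≥0∞) + 1) := by
          rw [mul_comm]; exact mul_le_mul_right (le_self_add) _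
  exact absurd (key t) (not_le.mpr h1)


lemma gap_of_expansive (s : ℝ) (hs : 0 < s) (F : Set X) (x : X)
    (hx : ∃ α : ℝ, 0 < α ∧ α < 1 ∧
      ∃ (r : ℕ → ℝ) (Fs : ℕ → Set X),
        (∀ k, 0 < r k) ∧ Tendsto r atTop (nhds 0) ∧
        (∀ k, IsClosed (Fs k) ∧ Fs k ⊆ F ∩ Metric.closedBall x (r k) ∧ x ∈ Fs k) ∧
        Tendsto (fun k =>
            μH[s] ((F ∩ Metric.closedBall x (r k)) \ Fs k) /
              ENNReal.ofReal ((2 * r k) ^ s)) atTop (nhds 0) ∧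
        0 < Filter.limsup (fun k =>
            exc (Metric.closedBall x (α * r k)) (Fs k) / ENNReal.ofReal (r k)) atTop) :
    ∃ β : ℝ, 0 < β ∧ β ≤ 1 ∧ GapP s F x β := by
  obtain ⟨α, hα0, hα1, r, Fs, hrpos, hrto, hFsprop, hmeasto, hlimsup⟩ := hx
  obtain ⟨γ, hγ0', hγ1, hγ2⟩ := ENNReal.lt_iff_exists_real_btwn.mp hlimsup
  have hγ0 : 0 < γ := by
    have := hγ1; rwa [ENNReal.ofReal_pos] at this
  have hβpos : 0 < min (γ / 4) ((1 - α) / 2) := lt_min (by positivity) (by linarith)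
  refine ⟨min (γ / 4) ((1 - α) / 2), hβpos, ?_, ?_⟩
  · calc min (γ / 4) ((1 - α) / 2) ≤ (1 - α) / 2 := min_le_right _ _
      _ ≤ 1 := by linarith
  set β := min (γ / 4) ((1 - α) / 2) with hβ
  have hβγ : β ≤ γ / 4 := min_le_left _ _
  have hβα : β ≤ (1 - α) / 2 := min_le_right _ _
  have hβ0 : 0 < β := hβpos
  intro ρ' hρ' ε hε
  have hc0 : (ENNReal.ofReal (2 ^ s)) ≠ 0 := by
    simp only [Ne, ENNReal.ofReal_eq_zero, not_le]
    positivity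
  have hctop : (ENNReal.ofReal (2 ^ s)) ≠ ⊤ := ENNReal.ofReal_ne_top
  set ε' := min 1 (ε / ENNReal.ofReal (2 ^ s)) with hε'
  have hε'0 : 0 < ε' := lt_min one_pos (ENNReal.div_pos hε.ne' hctop)
  -- find a good index k
  have hfreq : ∃ᶠ k in atTop, ENNReal.ofReal γ <
      exc (Metric.closedBall x (α * r k)) (Fs k) / ENNReal.ofReal (r k) :=
    Filter.frequently_lt_of_lt_limsup (by isBoundedDefault) hγ2
  have hev1 : ∀ᶠ k in atTop,
      μH[s] ((F ∩ Metric.closedBall x (r k)) \ Fs k) / ENNReal.ofReal ((2 * r k) ^ s) < ε' :=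
    hmeasto.eventually_lt_const hε'0
  have hev2 : ∀ᶠ k in atTop, r k < ρ' := hrto.eventually_lt_const hρ'
  obtain ⟨k, hk1, hk2, hk3⟩ := (hfreq.and_eventually (hev1.and hev2)).exists
  set r0 := r k with hr0
  have hr0pos : 0 < r0 := hrpos k
  -- extract the gap point y
  have hlt : ENNReal.ofReal (γ * r0) < exc (Metric.closedBall x (α * r0)) (Fs k) := by
    have := (ENNReal.lt_div_iff_mul_lt (Or.inl (by
        simp [ENNReal.ofReal_eq_zero, not_le, hr0pos])) (Or.inl ENNReal.ofReal_ne_top)).mp hk1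
    rwa [← ENNReal.ofReal_mul hγ0.le] at this
  rw [exc] at hlt
  rw [lt_iSup_iff] at hlt
  obtain ⟨y, hy⟩ := hlt
  rw [lt_iSup_iff] at hy
  obtain ⟨hymem, hy⟩ := hy
  have hyx : dist y x ≤ α * r0 := mem_closedBall.mp hymem
  have hyFs : ∀ b ∈ Fs k, γ * r0 < dist y b := by
    intro b hb
    have h1 : ENNReal.ofReal (γ * r0) < edist y b :=
      hy.trans_le (iInf_le_of_le b (iInf_le_of_le hb le_rfl))
    rw [edist_dist] at h1
    exact (ENNReal.ofReal_lt_ofReal_iff_of_nonneg (by positivity)).mp h1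
  have hxFs : x ∈ Fs k := (hFsprop k).2.2
  have hsub : closedBall y (2 * β * r0) ⊆ closedBall x r0 := by
    intro z hz
    rw [mem_closedBall] at hz ⊢
    have := dist_triangle z y x
    have h2β : 2 * β * r0 ≤ (1 - α) * r0 := by nlinarith
    nlinarith
  have hdistxy : 2 * β * r0 ≤ dist x y := by
    have := hyFs x hxFs
    rw [dist_comm] at this
    nlinarith
  refine ⟨r0, y, hr0pos, hk3.le, hsub, hdistxy, ?_⟩
  -- measure estimate
  have hsubset : F ∩ closedBall y (2 * β * r0) ⊆ (F ∩ Metric.closedBall x r0) \ Fs k := by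
    rintro z ⟨hzF, hz⟩
    refine ⟨⟨hzF, hsub hz⟩, fun hzFs => ?_⟩
    have h1 := hyFs z hzFs
    rw [mem_closedBall, dist_comm] at hz
    nlinarith
  have hm1 : μH[s] (F ∩ closedBall y (2 * β * r0)) ≤ ε' * ENNReal.ofReal ((2 * r0) ^ s) := by
    refine (measure_mono hsubset).trans ?_
    have hd0 : ENNReal.ofReal ((2 * r0) ^ s) ≠ 0 := by
      simp only [Ne, ENNReal.ofReal_eq_zero, not_le]
      positivity
    have := (ENNReal.div_lt_iff (Or.inl hd0) (Or.inl ENNReal.ofReal_ne_top)).mp hk2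
    exact this.le
  refine hm1.trans ?_
  have heq : ENNReal.ofReal ((2 * r0) ^ s) =
      ENNReal.ofReal (2 ^ s) * ENNReal.ofReal (r0 ^ s) := by
    rw [Real.mul_rpow (by norm_num) hr0pos.le,
      ENNReal.ofReal_mul (Real.rpow_nonneg (by norm_num) s)]
  rw [heq, ← mul_assoc]
  have hfin : ε' * ENNReal.ofReal (2 ^ s) ≤ ε := by
    have h1 : ε' ≤ ε / ENNReal.ofReal (2 ^ s) := min_le_right _ _
    exact (ENNReal.le_div_iff_mul_le (Or.inl hc0) (Or.inl hctop)).mp h1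
  exact mul_le_mul_left hfin _


lemma low_of_dens (s : ℝ) (hs : 0 < s) (F : Set X) (x : X)
    (hx : 0 < Filter.liminf
        (fun r : ℝ => μH[s] (F ∩ Metric.closedBall x r) / ENNReal.ofReal ((2 * r) ^ s))
        (nhdsWithin 0 (Set.Ioi 0))) :
    ∃ lam : ℝ≥0∞, lam ≠ 0 ∧ lam ≠ ⊤ ∧ ∃ ρ : ℝ, 0 < ρ ∧ ∀ r, 0 < r → r ≤ ρ →
      lam * ENNReal.ofReal (r ^ s) ≤ μH[s] (F ∩ closedBall x r) := by
  obtain ⟨c, hc0', hc1, hc2⟩ := ENNReal.lt_iff_exists_real_btwn.mp hx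
  have hc0 : 0 < c := by rwa [ENNReal.ofReal_pos] at hc1
  have hev : ∀ᶠ r in nhdsWithin 0 (Set.Ioi 0), ENNReal.ofReal c <
      μH[s] (F ∩ Metric.closedBall x r) / ENNReal.ofReal ((2 * r) ^ s) :=
    Filter.eventually_lt_of_lt_liminf hc2
  obtain ⟨ρ, hρ0, hρ⟩ := mem_nhdsGT_iff_exists_Ioc_subset.mp hev
  refine ⟨ENNReal.ofReal c, (ENNReal.ofReal_pos.mpr hc0).ne', ENNReal.ofReal_ne_top,
    ρ, hρ0, fun r hr hrρ => ?_⟩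
  have hmem : ENNReal.ofReal c <
      μH[s] (F ∩ Metric.closedBall x r) / ENNReal.ofReal ((2 * r) ^ s) :=
    hρ ⟨hr, hrρ⟩
  have hd0 : ENNReal.ofReal ((2 * r) ^ s) ≠ 0 := by
    simp only [Ne, ENNReal.ofReal_eq_zero, not_le]; positivity
  have h1 : ENNReal.ofReal c * ENNReal.ofReal ((2 * r) ^ s) ≤
      μH[s] (F ∩ Metric.closedBall x r) :=
    ((ENNReal.lt_div_iff_mul_lt (Or.inl hd0) (Or.inl ENNReal.ofReal_ne_top)).mp hmem).le
  refine le_trans ?_ h1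
  apply mul_le_mul_right
  apply ENNReal.ofReal_le_ofReal
  apply Real.rpow_le_rpow hr.le (by linarith) hs.le


lemma step_lemma (s : ℝ) (hs : 0 < s) (F G : Set X) (hFmeas : MeasurableSet F)
    (hF1 : μH[s] F ≠ ⊤) (hGF : G ⊆ F)
    (b ρ0 : ℝ) (hb : 0 < b) (hρ0 : 0 < ρ0)
    (lam T : ℝ≥0∞) (hlam0 : lam ≠ 0) (hlamtop : lam ≠ ⊤) (hT0 : T ≠ 0) (hTtop : T ≠ ⊤)
    (hGap : ∀ x ∈ G, GapP s F x b)
    (hLow : ∀ x ∈ G, ∀ r : ℝ, 0 < r → r ≤ ρ0 →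
      lam * ENNReal.ofReal (r^s) ≤ μH[s] (F ∩ closedBall x r))
    (hUp : ∀ x ∈ G, ∀ r : ℝ, 0 < r → r ≤ ρ0 →
      μH[s] (F ∩ closedBall x r) ≤ T * ENNReal.ofReal (r^s))
    (A : Set X) (hAG : A ⊆ G) (hA0 : μH[s] A ≠ 0)
    (δ : ℝ) (hδ : 0 < δ) (E : ℝ≥0∞) (hE : E ≠ 0) :
    ∃ (n : ℕ) (yc xc : Fin n → X) (rr : Fin n → ℝ),
      (∀ i, 0 < rr i ∧ rr i ≤ δ ∧ xc i ∈ A ∧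
        closedBall (yc i) (2*(b * rr i)) ⊆ closedBall (xc i) (rr i) ∧
        2*(b*rr i) ≤ dist (xc i) (yc i)) ∧
      (∀ i j, i ≠ j → Disjoint (closedBall (xc i) (rr i)) (closedBall (xc j) (rr j))) ∧
      μH[s] A ≤ μH[s] (A \ ⋃ i, closedBall (yc i) (2*(b*rr i))) + E ∧
      μH[s] A / (2 * T * ENNReal.ofReal (5^s)) ≤ ∑ i, ENNReal.ofReal (rr i ^ s) := by
  classical
  have hAF : A ⊆ F := hAG.trans hGF
  have hAtop : μH[s] A ≠ ⊤ := ne_top_of_le_ne_top hF1 (measure_mono hAF)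
  set δ1 := min δ (ρ0 / 5) with hδ1def
  have hδ1 : 0 < δ1 := lt_min hδ (by positivity)
  set Q : ℝ≥0∞ := μH[s] F / lam with hQdef
  have hQtop : Q ≠ ⊤ := (ENNReal.div_lt_top hF1 hlam0).ne
  set εpt : ℝ≥0∞ := E / (Q + 1) with hεptdef
  have hεpt : 0 < εpt := ENNReal.div_pos hE (by simp [hQtop])
  -- choose data at every point of A
  have hex : ∀ x : X, ∃ (r : ℝ) (y : X), x ∈ A → (0 < r ∧ r ≤ δ1 ∧
      closedBall y (2*b*r) ⊆ closedBall x r ∧ 2*b*r ≤ dist x y ∧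
      μH[s] (F ∩ closedBall y (2*b*r)) ≤ εpt * ENNReal.ofReal (r^s)) := by
    intro x
    by_cases hx : x ∈ A
    · obtain ⟨r, y, h⟩ := hGap x (hAG hx) δ1 hδ1 εpt hεpt
      exact ⟨r, y, fun _ => ⟨h.1, h.2.1, h.2.2.1, h.2.2.2.1, h.2.2.2.2⟩⟩
    · exact ⟨1, x, fun h => absurd h hx⟩
  choose rf yf hrf using hex
  have hrfA : ∀ x ∈ A, 0 < rf x ∧ rf x ≤ δ1 := fun x hx => ⟨(hrf x hx).1, (hrf x hx).2.1⟩
  have hLowA : ∀ x ∈ A, lam * ENNReal.ofReal (rf x ^ s) ≤ μH[s] (F ∩ closedBall x (rf x)) :=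
    fun x hx => hLow x (hAG hx) (rf x) (hrf x hx).1
      ((hrf x hx).2.1.trans ((min_le_right _ _).trans (by linarith)))
  obtain ⟨u, huA, hucount, hudisj, hucov⟩ :=
    vitali_pack s F A hFmeas hF1 rf δ1 hrfA
      (fun x hx => lt_of_lt_of_le
        (ENNReal.mul_pos hlam0 (by
          simp only [Ne, ENNReal.ofReal_eq_zero, not_le]
          exact Real.rpow_pos_of_pos (hrf x hx).1 s) : (0:ℝ≥0∞) < _)
        (hLowA x hx))
  haveI : Countable u := hucount.to_subtype
  -- total (countable) content bound
  have hdisj' : Pairwise (Function.onFun Disjoint fun i : u => F ∩ closedBall (i : X) (rf i)) := by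
    intro i j hij
    have : Disjoint (closedBall (i : X) (rf i)) (closedBall (j : X) (rf j)) :=
      hudisj i.2 j.2 (fun h => hij (Subtype.ext h))
    exact this.mono inter_subset_right inter_subset_right
  have hS1 : ∑' i : u, ENNReal.ofReal (rf i ^ s) ≤ Q := by
    rw [hQdef, ENNReal.le_div_iff_mul_le (Or.inl hlam0) (Or.inl hlamtop)]
    calc (∑' i : u, ENNReal.ofReal (rf i ^ s)) * lam
        = ∑' i : u, lam * ENNReal.ofReal (rf i ^ s) := by
          rw [← ENNReal.tsum_mul_right]; congr 1; ext i; ring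
      _ ≤ ∑' i : u, μH[s] (F ∩ closedBall (i : X) (rf i)) :=
          ENNReal.tsum_le_tsum fun i => hLowA i (huA i.2)
      _ = μH[s] (⋃ i : u, F ∩ closedBall (i : X) (rf i)) :=
          (measure_iUnion hdisj' (fun i => hFmeas.inter measurableSet_closedBall)).symm
      _ ≤ μH[s] F := measure_mono (iUnion_subset fun i => inter_subset_left)
  -- covering bound
  have hS2 : μH[s] A ≤ ∑' i : u, (T * ENNReal.ofReal (5^s)) * ENNReal.ofReal (rf i ^ s) := by
    calc μH[s] A ≤ μH[s] (⋃ i : u, F ∩ closedBall (i : X) (5 * rf i)) := by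
          apply measure_mono
          intro x hx
          rcases mem_iUnion₂.1 (hucov hx) with ⟨c, hc, hmem⟩
          exact mem_iUnion.2 ⟨⟨c, hc⟩, hAF hx, hmem⟩
      _ ≤ ∑' i : u, μH[s] (F ∩ closedBall (i : X) (5 * rf i)) := measure_iUnion_le _
      _ ≤ ∑' i : u, (T * ENNReal.ofReal (5^s)) * ENNReal.ofReal (rf i ^ s) := by
          apply ENNReal.tsum_le_tsum
          intro i
          have hipos := (hrfA i (huA i.2)).1
          have hile := (hrfA i (huA i.2)).2
          have h5 : 0 < 5 * rf i := by linarith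
          have h5ρ : 5 * rf i ≤ ρ0 := by
            have : rf i ≤ ρ0 / 5 := hile.trans (min_le_right _ _)
            linarith
          calc μH[s] (F ∩ closedBall (i : X) (5 * rf i))
              ≤ T * ENNReal.ofReal ((5 * rf i) ^ s) := hUp i (hAG (huA i.2)) _ h5 h5ρ
            _ = (T * ENNReal.ofReal (5^s)) * ENNReal.ofReal (rf i ^ s) := by
                rw [Real.mul_rpow (by norm_num) hipos.le,
                  ENNReal.ofReal_mul (Real.rpow_nonneg (by norm_num) s), mul_assoc]
  -- extract a finite subfamily capturing half the mass
  have hA2 : μH[s] A / 2 < ∑' i : u, (T * ENNReal.ofReal (5^s)) * ENNReal.ofReal (rf i ^ s) :=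
    lt_of_lt_of_le (ENNReal.half_lt_self hA0 hAtop) hS2
  rw [ENNReal.tsum_eq_iSup_sum] at hA2
  rw [lt_iSup_iff] at hA2
  obtain ⟨v, hv⟩ := hA2
  -- enumerate v
  set n := v.card with hn
  set e : Fin n → ↥u := fun i => v.equivFin.symm i with he
  have he_inj : Function.Injective e := by
    intro i j hij
    have h2 : (v.equivFin.symm i : ↥u) = (v.equivFin.symm j : ↥u) := hij
    have h3 := Subtype.ext h2 (p := fun z => z ∈ v)
    exact v.equivFin.symm.injective h3
  have hsum_eq : ∀ f : ↥u → ℝ≥0∞, ∑ i ∈ v, f i = ∑ i : Fin n, f (e i) := by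
    intro f
    rw [← Finset.sum_attach v f]
    exact Fintype.sum_equiv v.equivFin.symm _ _ (fun i => rfl) |>.symm
  set xc : Fin n → X := fun i => ((e i : ↥u) : X) with hxc
  set rr : Fin n → ℝ := fun i => rf (xc i) with hrr
  set yc : Fin n → X := fun i => yf (xc i) with hyc
  have hxcA : ∀ i, xc i ∈ A := fun i => huA (e i).2
  have hprops : ∀ i, 0 < rr i ∧ rr i ≤ δ ∧ xc i ∈ A ∧
      closedBall (yc i) (2*(b * rr i)) ⊆ closedBall (xc i) (rr i) ∧
      2*(b*rr i) ≤ dist (xc i) (yc i) := by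
    intro i
    have h := hrf (xc i) (hxcA i)
    refine ⟨h.1, h.2.1.trans (min_le_left _ _), hxcA i, ?_, ?_⟩
    · have := h.2.2.1; rwa [show 2*(b*rr i) = 2*b*rr i by ring]
    · have := h.2.2.2.1; rwa [show 2*(b*rr i) = 2*b*rr i by ring]
  refine ⟨n, yc, xc, rr, hprops, ?_, ?_, ?_⟩
  · -- disjointness
    intro i j hij
    have hne : (e i : X) ≠ (e j : X) := by
      intro hcc
      exact hij (he_inj (Subtype.ext hcc))
    exact hudisj (e i).2 (e j).2 hne
  · -- removal estimate
    set U := ⋃ i, closedBall (yc i) (2*(b*rr i)) with hU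
    have hcover : A ⊆ (A \ U) ∪ ⋃ i, (F ∩ closedBall (yc i) (2*(b*rr i))) := by
      intro z hz
      by_cases hzU : z ∈ U
      · rcases mem_iUnion.1 hzU with ⟨i, hi⟩
        exact Or.inr (mem_iUnion.2 ⟨i, hAF hz, hi⟩)
      · exact Or.inl ⟨hz, hzU⟩
    calc μH[s] A ≤ μH[s] ((A \ U) ∪ ⋃ i, (F ∩ closedBall (yc i) (2*(b*rr i)))) :=
          measure_mono hcover
      _ ≤ μH[s] (A \ U) + μH[s] (⋃ i, (F ∩ closedBall (yc i) (2*(b*rr i)))) :=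
          measure_union_le _ _
      _ ≤ μH[s] (A \ U) + ∑ i, μH[s] (F ∩ closedBall (yc i) (2*(b*rr i))) := by
          gcongr
          exact measure_iUnion_fintype_le _ _
      _ ≤ μH[s] (A \ U) + ∑ i, εpt * ENNReal.ofReal (rr i ^ s) := by
          gcongr with i
          have h := hrf (xc i) (hxcA i)
          have := h.2.2.2.2
          rwa [show 2*(b*rr i) = 2*b*rr i by ring]
      _ ≤ μH[s] (A \ U) + E := by
          gcongr
          calc ∑ i, εpt * ENNReal.ofReal (rr i ^ s)
              = εpt * ∑ i : Fin n, ENNReal.ofReal (rr i ^ s) := by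
                rw [Finset.mul_sum]
            _ ≤ εpt * Q := by
                gcongr
                calc ∑ i : Fin n, ENNReal.ofReal (rr i ^ s)
                    = ∑ i ∈ v, ENNReal.ofReal (rf i ^ s) :=
                      (hsum_eq (fun i => ENNReal.ofReal (rf i ^ s))).symm
                  _ ≤ ∑' i : u, ENNReal.ofReal (rf i ^ s) := ENNReal.sum_le_tsum v
                  _ ≤ Q := hS1
            _ ≤ E := by
                rw [hεptdef]
                calc E / (Q + 1) * Q ≤ E / (Q + 1) * (Q + 1) := by gcongr; exact le_self_add
                  _ = E := ENNReal.div_mul_cancel (by simp) (by simp [hQtop])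
  · -- content estimate
    have hc0 : (2 * T * ENNReal.ofReal (5^s)) ≠ 0 := by
      simp only [Ne, mul_eq_zero, not_or]
      refine ⟨⟨by norm_num, hT0⟩, ?_⟩
      simp only [ENNReal.ofReal_eq_zero, not_le]
      positivity
    have hctop : (2 * T * ENNReal.ofReal (5^s)) ≠ ⊤ := by
      simp [ENNReal.mul_eq_top, hTtop]
    rw [ENNReal.div_le_iff_le_mul (Or.inl hc0) (Or.inl hctop)]
    have hvsum : ∑ i ∈ v, (T * ENNReal.ofReal (5^s)) * ENNReal.ofReal (rf i ^ s)
        = (T * ENNReal.ofReal (5^s)) * ∑ i : Fin n, ENNReal.ofReal (rr i ^ s) := by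
      rw [hsum_eq (fun i => (T * ENNReal.ofReal (5^s)) * ENNReal.ofReal (rf i ^ s)),
        ← Finset.mul_sum]
    calc μH[s] A = μH[s] A / 2 * 2 := (ENNReal.div_mul_cancel (by norm_num) (by norm_num)).symm
      _ ≤ (T * ENNReal.ofReal (5^s)) * (∑ i : Fin n, ENNReal.ofReal (rr i ^ s)) * 2 := by
          gcongr
          rw [← hvsum]
          exact hv.le
      _ = (∑ i : Fin n, ENNReal.ofReal (rr i ^ s)) * (2 * T * ENNReal.ofReal (5^s)) := by ring


lemma list_pos_lb (L : List (X × ℝ)) (h : ∀ p ∈ L, 0 < p.2) :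
    ∃ d : ℝ, 0 < d ∧ ∀ p ∈ L, 2 * d ≤ p.2 := by
  induction L with
  | nil => exact ⟨1, one_pos, by simp⟩
  | cons p L ih =>
    obtain ⟨d, hd, hdle⟩ := ih (fun q hq => h q (List.mem_cons_of_mem _ hq))
    have hp := h p (List.mem_cons_self)
    refine ⟨min d (p.2 / 4), lt_min hd (by linarith), ?_⟩
    intro q hq
    rcases List.mem_cons.mp hq with rfl | hq
    · have : min d (q.2/4) ≤ q.2/4 := min_le_right _ _
      linarith
    · have h1 : min d (p.2/4) ≤ d := min_le_left _ _
      have := hdle q hq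
      linarith

lemma geom_tail_le (g : ℝ≥0∞) (n : ℕ) :
    ∑ j ∈ Finset.range n, g / 2 ^ (j + 2) ≤ g / 2 := by
  have h1 : ∀ j : ℕ, g / 2 ^ (j + 2) = g * (2⁻¹ : ℝ≥0∞) ^ (j + 2) := by
    intro j; rw [div_eq_mul_inv, ENNReal.inv_pow]
  simp_rw [h1]
  rw [← Finset.mul_sum]
  have h2 : ∑ j ∈ Finset.range n, (2⁻¹ : ℝ≥0∞) ^ (j + 2) ≤ 2⁻¹ := by
    refine le_trans (ENNReal.sum_le_tsum _) ?_
    have h3 : ∀ j : ℕ, (2⁻¹ : ℝ≥0∞) ^ (j + 2) = (2⁻¹) ^ j * (2⁻¹)^2 := fun j => pow_add _ _ _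
    rw [tsum_congr h3, ENNReal.tsum_mul_right, ENNReal.tsum_geometric]
    have h4 : (1 : ℝ≥0∞) - 2⁻¹ = 2⁻¹ := ENNReal.one_sub_inv_two
    rw [h4, inv_inv]
    rw [show ((2:ℝ≥0∞)⁻¹)^2 = (2*2:ℝ≥0∞)⁻¹ by
      rw [← ENNReal.inv_pow]; congr 1; norm_num]
    rw [ENNReal.mul_inv (by norm_num) (by norm_num), ← mul_assoc,
      ENNReal.mul_inv_cancel (by norm_num) (by norm_num), one_mul]
  calc g * ∑ j ∈ Finset.range n, (2⁻¹:ℝ≥0∞) ^ (j+2) ≤ g * 2⁻¹ := by gcongr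
    _ = g / 2 := by rw [div_eq_mul_inv]

lemma restrict_ae_subset (s : ℝ) {P : X → Prop} (F : Set X) (hFmeas : MeasurableSet F)
    (h : ∀ᵐ x ∂((μH[s]).restrict F), P x) :
    ∃ N : Set X, MeasurableSet N ∧ μH[s] (N ∩ F) = 0 ∧ ∀ x, ¬ P x → x ∈ N := by
  have h0 : (μH[s]).restrict F {x | ¬ P x} = 0 := ae_iff.mp h
  set N := toMeasurable ((μH[s]).restrict F) {x | ¬ P x} with hN
  have hNm : MeasurableSet N := measurableSet_toMeasurable _ _
  have h1 : (μH[s]).restrict F N = 0 := by rw [hN, measure_toMeasurable]; exact h0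
  rw [Measure.restrict_apply hNm] at h1
  exact ⟨N, hNm, h1, fun x hx => subset_toMeasurable _ _ hx⟩

end Helpers

/-- If `F ⊆ X` is `s`-expansive in `X` (with `0 < ℋ^s(F) < ∞`) and the lower `s`-density of
`F` is positive `ℋ^s`-a.e. on `F`, then `X` does not have finite `s`-packing content: for every
`M > 0` there is a countable family of mutually disjoint closed balls centered in `X`, of radii
at most `diam X`, with `∑ r(Bᵢ)^s ≥ M`. -/
theorem stmt17 {X : Type*} [MetricSpace X] [MeasurableSpace X] [BorelSpace X]
    (s : ℝ) (hs : 0 < s) (F : Set X) (hFmeas : MeasurableSet F)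
    (hF0 : 0 < μH[s] F) (hF1 : μH[s] F < ⊤)
    (hexp : ∀ᵐ x ∂(μH[s].restrict F), ∃ α : ℝ, 0 < α ∧ α < 1 ∧
      ∃ (r : ℕ → ℝ) (Fs : ℕ → Set X),
        (∀ k, 0 < r k) ∧ Tendsto r atTop (nhds 0) ∧
        (∀ k, IsClosed (Fs k) ∧ Fs k ⊆ F ∩ Metric.closedBall x (r k) ∧ x ∈ Fs k) ∧
        Tendsto (fun k =>
            μH[s] ((F ∩ Metric.closedBall x (r k)) \ Fs k) /
              ENNReal.ofReal ((2 * r k) ^ s)) atTop (nhds 0) ∧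
        0 < Filter.limsup (fun k =>
            exc (Metric.closedBall x (α * r k)) (Fs k) / ENNReal.ofReal (r k)) atTop)
    (hdens : ∀ᵐ x ∂(μH[s].restrict F),
      0 < Filter.liminf
        (fun r : ℝ => μH[s] (F ∩ Metric.closedBall x r) / ENNReal.ofReal ((2 * r) ^ s))
        (nhdsWithin 0 (Set.Ioi 0))) :
    ∀ M : ℝ, 0 < M →
      ∃ (cs : ℕ → X) (rs : ℕ → ℝ),
        (∀ i, 0 < rs i ∧ ENNReal.ofReal (rs i) ≤ EMetric.diam (Set.univ : Set X)) ∧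
        (Pairwise fun i j =>
          Disjoint (Metric.closedBall (cs i) (rs i)) (Metric.closedBall (cs j) (rs j))) ∧
        ENNReal.ofReal M ≤ ∑' i, ENNReal.ofReal (rs i ^ s) := by
  intro M hM
  classical
  have hFne : μH[s] F ≠ ⊤ := hF1.ne
  -- Step A: a full-measure subset of F with all pointwise properties
  obtain ⟨N1, hN1m, hN1null, hN1⟩ := restrict_ae_subset s F hFmeas hexp
  obtain ⟨N2, hN2m, hN2null, hN2⟩ := restrict_ae_subset s F hFmeas hdens
  set Bad := {x : X | ∀ t : ℕ, ∀ ρ : ℝ, 0 < ρ → ∃ r, 0 < r ∧ r ≤ ρ ∧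
      ((t : ℝ≥0∞) + 1) * ENNReal.ofReal (r ^ s) < μH[s] (F ∩ closedBall x r)} with hBadDef
  have hBadNull : μH[s] Bad = 0 := bad_null s hs F hFmeas hFne
  set N3 := toMeasurable (μH[s]) Bad with hN3def
  have hN3null : μH[s] N3 = 0 := by
    rw [hN3def, measure_toMeasurable]; exact hBadNull
  set F' := F \ (N1 ∪ N2 ∪ N3) with hF'def
  have hF'F : F' ⊆ F := diff_subset
  have hμF' : μH[s] F' ≠ 0 := by
    intro h0
    have hsub : F ⊆ F' ∪ ((N1 ∩ F) ∪ ((N2 ∩ F) ∪ N3)) := by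
      intro z hz
      by_cases h1 : z ∈ N1 ∪ N2 ∪ N3
      · rcases h1 with (h | h) | h
        · exact Or.inr (Or.inl ⟨h, hz⟩)
        · exact Or.inr (Or.inr (Or.inl ⟨h, hz⟩))
        · exact Or.inr (Or.inr (Or.inr h))
      · exact Or.inl ⟨hz, h1⟩
    have hb : μH[s] F ≤ μH[s] F' := by
      calc μH[s] F ≤ μH[s] (F' ∪ ((N1 ∩ F) ∪ ((N2 ∩ F) ∪ N3))) := measure_mono hsub
        _ ≤ μH[s] F' + μH[s] ((N1 ∩ F) ∪ ((N2 ∩ F) ∪ N3)) := measure_union_le _ _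
        _ ≤ μH[s] F' + (μH[s] (N1 ∩ F) + μH[s] ((N2 ∩ F) ∪ N3)) := by
            gcongr; exact measure_union_le _ _
        _ ≤ μH[s] F' + (μH[s] (N1 ∩ F) + (μH[s] (N2 ∩ F) + μH[s] N3)) := by
            gcongr; exact measure_union_le _ _
        _ = μH[s] F' := by rw [hN1null, hN2null, hN3null]; simp
    exact hF0.ne' (le_antisymm (by simpa [h0] using hb) (zero_le))
  -- Step B: uniformization
  set Sm : ℕ → Set X := fun m => {x ∈ F' | GapP s F x (1/((m:ℝ)+1)) ∧
    ∀ r : ℝ, 0 < r → r ≤ 1/((m:ℝ)+1) →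
      ((m:ℝ≥0∞)+1)⁻¹ * ENNReal.ofReal (r^s) ≤ μH[s] (F ∩ closedBall x r) ∧
      μH[s] (F ∩ closedBall x r) ≤ ((m:ℝ≥0∞)+1) * ENNReal.ofReal (r^s)} with hSmdef
  have hcover : F' ⊆ ⋃ m, Sm m := by
    intro x hx
    obtain ⟨hxF, hxN⟩ := hx
    have hxN1 : x ∉ N1 := fun h => hxN (Or.inl (Or.inl h))
    have hxN2 : x ∉ N2 := fun h => hxN (Or.inl (Or.inr h))
    have hxN3 : x ∉ N3 := fun h => hxN (Or.inr h)
    obtain ⟨β, hβ0, hβ1, hβgap⟩ := gap_of_expansive s hs F x (by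
      by_contra h; exact hxN1 (hN1 x h))
    obtain ⟨lam, hlam0, hlamtop, ρ1, hρ1, hlow⟩ := low_of_dens s hs F x (by
      by_contra h
      exact hxN2 (hN2 x h))
    obtain ⟨t, ρ2, hρ2, hup⟩ : ∃ t : ℕ, ∃ ρ2, 0 < ρ2 ∧ ∀ r, 0 < r → r ≤ ρ2 →
        μH[s] (F ∩ closedBall x r) ≤ ((t:ℝ≥0∞)+1) * ENNReal.ofReal (r^s) := by
      have hnb : x ∉ Bad := fun h => hxN3 (subset_toMeasurable _ _ h)
      rw [hBadDef] at hnb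
      simp only [Set.mem_setOf_eq] at hnb
      push_neg at hnb
      obtain ⟨t, ρ2, hρ2, h⟩ := hnb
      exact ⟨t, ρ2, hρ2, h⟩
    obtain ⟨m1, hm1⟩ := ENNReal.exists_inv_nat_lt hlam0
    obtain ⟨m2, hm2⟩ := exists_nat_one_div_lt
      (show (0:ℝ) < min β (min ρ1 ρ2) from lt_min hβ0 (lt_min hρ1 hρ2))
    set m := m1 + m2 + t with hmdef
    have hmm2 : (m2 : ℝ) ≤ (m : ℝ) := by
      have : m2 ≤ m := by omega
      exact_mod_cast this
    have hmsmall : 1/((m:ℝ)+1) ≤ min β (min ρ1 ρ2) := by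
      refine le_trans ?_ hm2.le
      apply one_div_le_one_div_of_le (by positivity)
      linarith
    have hmβ : 1/((m:ℝ)+1) ≤ β := hmsmall.trans (min_le_left _ _)
    have hmρ1 : 1/((m:ℝ)+1) ≤ ρ1 := hmsmall.trans ((min_le_right _ _).trans (min_le_left _ _))
    have hmρ2 : 1/((m:ℝ)+1) ≤ ρ2 := hmsmall.trans ((min_le_right _ _).trans (min_le_right _ _))
    have hm0 : (0:ℝ) < 1/((m:ℝ)+1) := by positivity
    refine mem_iUnion.2 ⟨m, ⟨hxF, hxN⟩, ?_, ?_⟩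
    · -- gap property with smaller parameter
      intro ρ' hρ' ε hε
      obtain ⟨r, y, hr0, hrρ, hsubB, hdistB, hmeasB⟩ := hβgap ρ' hρ' ε hε
      have hb' : 2 * (1/((m:ℝ)+1)) * r ≤ 2 * β * r := by nlinarith
      refine ⟨r, y, hr0, hrρ, ?_, ?_, ?_⟩
      · exact (closedBall_subset_closedBall hb').trans hsubB
      · linarith
      · refine le_trans (measure_mono ?_) hmeasB
        exact inter_subset_inter_right _ (closedBall_subset_closedBall hb')
    · -- density bounds
      intro r hr0 hrm
      constructor
      · refine le_trans (mul_le_mul_left ?_ _) (hlow r hr0 (hrm.trans hmρ1))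
        refine le_trans ?_ hm1.le
        rw [ENNReal.inv_le_inv]
        have : (m1 : ℝ≥0∞) ≤ (m : ℝ≥0∞) := Nat.cast_le.mpr (by omega)
        exact this.trans le_self_add
      · refine le_trans (hup r hr0 (hrm.trans hmρ2)) (mul_le_mul_left ?_ _)
        have : (t : ℝ≥0∞) ≤ (m : ℝ≥0∞) := Nat.cast_le.mpr (by omega)
        exact add_le_add_left this 1
  have hSmne : ∃ m, μH[s] (Sm m) ≠ 0 := by
    by_contra h
    push_neg at h
    have h2 : μH[s] (⋃ m, Sm m) = 0 := measure_iUnion_null (by simpa using h)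
    exact hμF' (le_antisymm ((measure_mono hcover).trans h2.le) (zero_le))
  obtain ⟨m, hG0⟩ := hSmne
  -- Step C: constants
  set G := Sm m with hGdef
  have hGF' : G ⊆ F' := fun x hx => hx.1
  have hGF : G ⊆ F := fun x hx => hF'F (hGF' hx)
  have hGtop : μH[s] G ≠ ⊤ := ne_top_of_le_ne_top hFne (measure_mono hGF)
  set b : ℝ := 1/((m:ℝ)+1) with hbdef
  have hb : 0 < b := by positivity
  have hb1 : b ≤ 1 := by
    rw [hbdef]
    rw [div_le_one (by positivity)]
    linarith [Nat.cast_nonneg (α := ℝ) m]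
  set lam : ℝ≥0∞ := ((m:ℝ≥0∞)+1)⁻¹ with hlamdef
  set T : ℝ≥0∞ := (m:ℝ≥0∞)+1 with hTdef
  have hmtop : ((m:ℝ≥0∞)+1) ≠ ⊤ := by
    simp [ENNReal.add_eq_top, ENNReal.natCast_ne_top]
  have hm0' : ((m:ℝ≥0∞)+1) ≠ 0 := by simp
  have hT0 : T ≠ 0 := by rw [hTdef]; exact hm0'
  have hTtop : T ≠ ⊤ := by rw [hTdef]; exact hmtop
  have hlam0 : lam ≠ 0 := by rw [hlamdef, Ne, ENNReal.inv_eq_zero]; exact hmtop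
  have hlamtop : lam ≠ ⊤ := by rw [hlamdef, Ne, ENNReal.inv_eq_top]; exact hm0'
  have hGap : ∀ x ∈ G, GapP s F x b := fun x hx => hx.2.1
  have hLow : ∀ x ∈ G, ∀ r : ℝ, 0 < r → r ≤ b →
      lam * ENNReal.ofReal (r^s) ≤ μH[s] (F ∩ closedBall x r) :=
    fun x hx r h1 h2 => (hx.2.2 r h1 h2).1
  have hUp : ∀ x ∈ G, ∀ r : ℝ, 0 < r → r ≤ b →
      μH[s] (F ∩ closedBall x r) ≤ T * ENNReal.ofReal (r^s) :=
    fun x hx r h1 h2 => (hx.2.2 r h1 h2).2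
  set denom : ℝ≥0∞ := 2 * T * ENNReal.ofReal (5^s) with hdenomdef
  have hden0 : denom ≠ 0 := by
    simp only [hdenomdef, Ne, mul_eq_zero, not_or]
    refine ⟨⟨by norm_num, hT0⟩, ?_⟩
    simp only [ENNReal.ofReal_eq_zero, not_le]
    positivity
  have hdentop : denom ≠ ⊤ := by
    simp [hdenomdef, ENNReal.mul_eq_top, hTtop]
  set κ : ℝ≥0∞ := ENNReal.ofReal (b^s) * ((μH[s] G / 2) / denom) with hκdef
  have hbs0 : ENNReal.ofReal (b^s) ≠ 0 := by
    simp only [Ne, ENNReal.ofReal_eq_zero, not_le]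
    positivity
  have hG20 : μH[s] G / 2 ≠ 0 := by
    simp [ENNReal.div_eq_zero_iff, hG0]
  have hκ0 : κ ≠ 0 := by
    refine mul_ne_zero hbs0 ?_
    simp only [Ne, ENNReal.div_eq_zero_iff, not_or]
    exact ⟨⟨hG0, by simp⟩, hdentop⟩
  have hκtop : κ ≠ ⊤ := by
    apply ENNReal.mul_ne_top ENNReal.ofReal_ne_top
    exact (ENNReal.div_lt_top (ne_top_of_le_ne_top hGtop ENNReal.half_le_self) hden0).ne
  -- Step D: iterative construction
  have main : ∀ n : ℕ, ∃ (L : List (X × ℝ)) (δ : ℝ),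
      (∀ p ∈ L, 0 < p.2 ∧ ENNReal.ofReal p.2 ≤ EMetric.diam (univ : Set X)) ∧
      L.Pairwise (fun p q => Disjoint (closedBall p.1 p.2) (closedBall q.1 q.2)) ∧
      0 < δ ∧ (∀ p ∈ L, 2 * δ ≤ p.2) ∧
      μH[s] G ≤ μH[s] (G \ ⋃ p ∈ L, closedBall p.1 (2 * p.2)) +
        ∑ j ∈ Finset.range n, μH[s] G / 2^(j+2) ∧
      (n : ℝ≥0∞) * κ ≤ (L.map (fun p => ENNReal.ofReal (p.2 ^ s))).sum := by
    intro n
    induction n with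
    | zero => exact ⟨[], 1, by simp, by simp, one_pos, by simp, by simp, by simp⟩
    | succ n ih =>
      obtain ⟨L, δ, hI1, hI2, hδ, hI3, hI4, hI5⟩ := ih
      set A := G \ ⋃ p ∈ L, closedBall p.1 (2*p.2) with hAdef
      have hAG : A ⊆ G := diff_subset
      have hA2 : μH[s] G / 2 ≤ μH[s] A := by
        have h2 : μH[s] G - μH[s] G / 2 ≤ μH[s] A := by
          apply tsub_le_iff_right.mpr
          exact hI4.trans (by gcongr; exact geom_tail_le _ _)
        rwa [ENNReal.sub_half hGtop] at h2
      have hA0 : μH[s] A ≠ 0 := fun h0 => hG20 (le_antisymm (h0 ▸ hA2) (zero_le))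
      have hE0 : (μH[s] G / 2^(n+2)) ≠ 0 := by
        simp only [Ne, ENNReal.div_eq_zero_iff, not_or]
        exact ⟨hG0, by simp [ENNReal.pow_eq_top_iff]⟩
      obtain ⟨k, yc, xc, rr, hprops, hdisj, hrem, hcont⟩ :=
        step_lemma s hs F G hFmeas hFne hGF b b hb hb lam T hlam0 hlamtop hT0 hTtop
          hGap hLow hUp A hAG hA0 δ hδ _ hE0
      set newL : List (X × ℝ) := List.ofFn (fun i : Fin k => (yc i, b * rr i)) with hnewLdef
      have hnewmem : ∀ p ∈ newL, ∃ i : Fin k, p = (yc i, b * rr i) := by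
        intro p hp
        rw [hnewLdef, List.mem_ofFn] at hp
        obtain ⟨i, hi⟩ := hp
        exact ⟨i, hi.symm⟩
      obtain ⟨d, hd0, hdle⟩ := list_pos_lb newL (by
        intro p hp
        obtain ⟨i, rfl⟩ := hnewmem p hp
        exact mul_pos hb (hprops i).1)
      -- disjointness of new balls from old balls
      have hcross : ∀ p ∈ L, ∀ i : Fin k,
          Disjoint (closedBall p.1 p.2) (closedBall (xc i) (rr i)) := by
        intro p hp i
        have hxcA : xc i ∈ A := (hprops i).2.2.1
        have hdist : 2 * p.2 < dist (xc i) p.1 := by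
          have : xc i ∉ closedBall p.1 (2*p.2) := by
            intro hmem
            exact hxcA.2 (mem_iUnion₂.2 ⟨p, hp, hmem⟩)
          simpa [mem_closedBall, not_le] using this
        apply closedBall_disjoint_closedBall
        have h1 := (hprops i).2.1  -- rr i ≤ δ
        have h2 := hI3 p hp       -- 2δ ≤ p.2
        have h3 := (hI1 p hp).1   -- 0 < p.2
        rw [dist_comm]
        nlinarith
      have hballsub : ∀ i : Fin k,
          closedBall (yc i) (b * rr i) ⊆ closedBall (xc i) (rr i) := by
        intro i
        refine (closedBall_subset_closedBall ?_).trans (hprops i).2.2.2.1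
        nlinarith [(hprops i).1, hb]
      refine ⟨L ++ newL, min δ d, ?_, ?_, lt_min hδ hd0, ?_, ?_, ?_⟩
      · intro p hp
        rcases List.mem_append.mp hp with hp | hp
        · exact hI1 p hp
        · obtain ⟨i, rfl⟩ := hnewmem p hp
          refine ⟨mul_pos hb (hprops i).1, ?_⟩
          have h2 := (hprops i).2.2.2.2
          have hofr : ENNReal.ofReal (b * rr i) ≤ edist (xc i) (yc i) := by
            rw [edist_dist]
            apply ENNReal.ofReal_le_ofReal
            nlinarith [mul_pos hb (hprops i).1]
          exact hofr.trans (EMetric.edist_le_diam_of_mem (mem_univ _) (mem_univ _))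
      · rw [List.pairwise_append]
        refine ⟨hI2, ?_, ?_⟩
        · rw [hnewLdef, List.pairwise_ofFn]
          intro i j hij
          exact ((hdisj i j hij.ne).mono (hballsub i) (hballsub j))
        · intro p hp q hq
          obtain ⟨i, rfl⟩ := hnewmem q hq
          exact (hcross p hp i).mono_right (hballsub i)
      · intro p hp
        rcases List.mem_append.mp hp with hp | hp
        · have h1 := hI3 p hp
          have h2 : min δ d ≤ δ := min_le_left _ _
          linarith
        · have h1 := hdle p hp
          have h2 : min δ d ≤ d := min_le_right _ _
          linarith
      · -- measure invariant
        have hunion : (⋃ p ∈ L ++ newL, closedBall p.1 (2*p.2)) =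
            (⋃ p ∈ L, closedBall p.1 (2*p.2)) ∪
              ⋃ i : Fin k, closedBall (yc i) (2*(b*rr i)) := by
          ext z
          simp only [mem_iUnion, mem_union, List.mem_append]
          constructor
          · rintro ⟨p, hp | hp, hz⟩
            · exact Or.inl ⟨p, hp, hz⟩
            · obtain ⟨i, rfl⟩ := hnewmem p hp
              exact Or.inr ⟨i, by simpa [mul_assoc] using hz⟩
          · rintro (⟨p, hp, hz⟩ | ⟨i, hz⟩)
            · exact ⟨p, Or.inl hp, hz⟩
            · refine ⟨(yc i, b * rr i), Or.inr ?_, by simpa [mul_assoc] using hz⟩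
              rw [hnewLdef, List.mem_ofFn]
              exact ⟨i, rfl⟩
        rw [hunion, ← diff_diff]
        calc μH[s] G ≤ μH[s] A + ∑ j ∈ Finset.range n, μH[s] G / 2^(j+2) := hI4
          _ ≤ (μH[s] (A \ ⋃ i, closedBall (yc i) (2*(b*rr i))) + μH[s] G / 2^(n+2)) +
              ∑ j ∈ Finset.range n, μH[s] G / 2^(j+2) := by gcongr
          _ = μH[s] (A \ ⋃ i, closedBall (yc i) (2*(b*rr i))) +
              ∑ j ∈ Finset.range (n+1), μH[s] G / 2^(j+2) := by
              rw [Finset.sum_range_succ]; ring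
      · -- content invariant
        have hnewsum : (newL.map (fun p => ENNReal.ofReal (p.2^s))).sum
            = ∑ i : Fin k, ENNReal.ofReal ((b * rr i)^s) := by
          rw [hnewLdef, List.map_ofFn, List.sum_ofFn]
          rfl
        have hstep : κ ≤ ∑ i : Fin k, ENNReal.ofReal ((b*rr i)^s) := by
          calc κ ≤ ENNReal.ofReal (b^s) * (μH[s] A / denom) := by
                rw [hκdef]; gcongr
            _ ≤ ENNReal.ofReal (b^s) * ∑ i, ENNReal.ofReal (rr i ^ s) := by
                gcongr
            _ = ∑ i, ENNReal.ofReal (b^s) * ENNReal.ofReal (rr i^s) := Finset.mul_sum _ _ _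
            _ = ∑ i, ENNReal.ofReal ((b*rr i)^s) := by
                apply Finset.sum_congr rfl
                intro i _
                rw [← ENNReal.ofReal_mul (Real.rpow_nonneg hb.le s),
                  ← Real.mul_rpow hb.le (hprops i).1.le]
        rw [List.map_append, List.sum_append, hnewsum]
        push_cast
        rw [add_mul, one_mul]
        exact add_le_add hI5 hstep
  -- Step E: choose the number of iterations
  obtain ⟨NN, hNN⟩ := ENNReal.exists_nat_gt
    (show ENNReal.ofReal M / κ ≠ ⊤ from (ENNReal.div_lt_top ENNReal.ofReal_ne_top hκ0).ne)
  have hMN : ENNReal.ofReal M ≤ (NN : ℝ≥0∞) * κ :=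
    ((ENNReal.div_lt_iff (Or.inl hκ0) (Or.inl hκtop)).mp hNN).le
  obtain ⟨L, δN, hI1, hI2, hδN, hI3, hI4, hI5⟩ := main NN
  -- Step F: the infinite tail
  set A := G \ ⋃ p ∈ L, closedBall p.1 (2*p.2) with hAdef
  have hA2 : μH[s] G / 2 ≤ μH[s] A := by
    have h2 : μH[s] G - μH[s] G / 2 ≤ μH[s] A := by
      apply tsub_le_iff_right.mpr
      exact hI4.trans (by gcongr; exact geom_tail_le _ _)
    rwa [ENNReal.sub_half hGtop] at h2
  have hA0 : μH[s] A ≠ 0 := fun h0 => hG20 (le_antisymm (h0 ▸ hA2) (zero_le))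
  obtain ⟨xI, hxI⟩ := nonempty_of_measure_ne_zero hA0
  have hxIG : xI ∈ G := hxI.1
  have hgap1 : ∀ d : ℝ, 0 < d → ∃ r, ∃ y, 0 < r ∧ r ≤ d ∧
      closedBall y (2*b*r) ⊆ closedBall xI r ∧ 2*b*r ≤ dist xI y := by
    intro d hd
    obtain ⟨r, y, h1, h2, h3, h4, _⟩ := hGap xI hxIG d hd 1 one_pos
    exact ⟨r, y, h1, h2, h3, h4⟩
  choose rt yt hrt1 hrt2 hrt3 hrt4 using hgap1
  set Df : ℕ → {d : ℝ // 0 < d ∧ d ≤ δN} := fun j => Nat.rec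
    (⟨δN, hδN, le_rfl⟩ : {d : ℝ // 0 < d ∧ d ≤ δN})
    (fun _ p => ⟨b * rt p.1 p.2.1 / 2, by
        have := hrt1 p.1 p.2.1
        constructor
        · positivity
        · have h1 := hrt2 p.1 p.2.1
          have h2 := p.2.2
          have h3 := p.2.1
          nlinarith⟩) j with hDf
  have hDsucc : ∀ j : ℕ, (Df (j+1)).1 = b * rt (Df j).1 (Df j).2.1 / 2 := fun j => rfl
  set tj : ℕ → ℝ := fun j => rt (Df j).1 (Df j).2.1 with htj
  set ty : ℕ → X := fun j => yt (Df j).1 (Df j).2.1 with hty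
  have htjpos : ∀ j, 0 < tj j := fun j => hrt1 _ _
  have htjle : ∀ j, tj j ≤ (Df j).1 := fun j => hrt2 _ _
  have hDmono : ∀ j, (Df (j+1)).1 ≤ (Df j).1 := by
    intro j
    rw [hDsucc]
    have h1 := htjpos j
    have h2 := htjle j
    have h3 := (Df j).2.1
    nlinarith
  have hDanti : ∀ i j, i ≤ j → (Df j).1 ≤ (Df i).1 := by
    intro i j hij
    induction j with
    | zero =>
      have h0 : i = 0 := Nat.le_zero.mp hij
      subst h0
      exact le_rfl
    | succ j ihj =>
      rcases Nat.lt_or_ge i (j+1) with h | h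
      · exact (hDmono j).trans (ihj (by omega))
      · have : i = j + 1 := by omega
        subst this; rfl
  have htsub : ∀ j, closedBall (ty j) (b * tj j) ⊆ closedBall xI ((Df j).1) := by
    intro j
    refine (closedBall_subset_closedBall ?_).trans ((hrt3 _ _).trans
      (closedBall_subset_closedBall (htjle j)))
    nlinarith [htjpos j, hb]
  have htdiam : ∀ j, ENNReal.ofReal (b * tj j) ≤ EMetric.diam (univ : Set X) := by
    intro j
    have h4 := hrt4 (Df j).1 (Df j).2.1
    have : ENNReal.ofReal (b * tj j) ≤ edist xI (ty j) := by
      rw [edist_dist]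
      apply ENNReal.ofReal_le_ofReal
      nlinarith [htjpos j, hb]
    exact this.trans (EMetric.edist_le_diam_of_mem (mem_univ _) (mem_univ _))
  have htdisjL : ∀ p ∈ L, ∀ j, Disjoint (closedBall p.1 p.2) (closedBall (ty j) (b * tj j)) := by
    intro p hp j
    refine Disjoint.mono_right ((htsub j).trans (closedBall_subset_closedBall (Df j).2.2)) ?_
    apply closedBall_disjoint_closedBall
    have hdist : 2 * p.2 < dist xI p.1 := by
      have : xI ∉ closedBall p.1 (2*p.2) := by
        intro hmem
        exact hxI.2 (mem_iUnion₂.2 ⟨p, hp, hmem⟩)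
      simpa [mem_closedBall, not_le] using this
    have h2 := hI3 p hp
    have h3 := (hI1 p hp).1
    rw [dist_comm]
    nlinarith
  have htdisjT : ∀ i j, i < j →
      Disjoint (closedBall (ty i) (b * tj i)) (closedBall (ty j) (b * tj j)) := by
    intro i j hij
    have hsub2 : closedBall (ty j) (b * tj j) ⊆ closedBall xI (b * tj i / 2) := by
      refine (htsub j).trans (closedBall_subset_closedBall ?_)
      have := hDanti (i+1) j hij
      rw [hDsucc] at this
      exact this
    refine Disjoint.mono_right hsub2 ?_
    apply closedBall_disjoint_closedBall
    have h4 := hrt4 (Df i).1 (Df i).2.1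
    have h5 := htjpos i
    rw [dist_comm]
    nlinarith [hb]
  -- Step G: assemble
  set len := L.length with hlen
  set cs : ℕ → X := fun i => if h : i < len then (L.get ⟨i, h⟩).1 else ty (i - len) with hcs
  set rs : ℕ → ℝ := fun i => if h : i < len then (L.get ⟨i, h⟩).2 else b * tj (i - len) with hrs
  have hget : ∀ i (h : i < len), cs i = (L.get ⟨i, h⟩).1 ∧ rs i = (L.get ⟨i, h⟩).2 := by
    intro i h
    exact ⟨dif_pos h, dif_pos h⟩
  have hget' : ∀ i, len ≤ i → cs i = ty (i - len) ∧ rs i = b * tj (i - len) := by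
    intro i h
    exact ⟨dif_neg (Nat.not_lt.mpr h), dif_neg (Nat.not_lt.mpr h)⟩
  refine ⟨cs, rs, ?_, ?_, ?_⟩
  · intro i
    by_cases h : i < len
    · obtain ⟨h1, h2⟩ := hget i h
      rw [h2]
      exact ⟨(hI1 _ (L.get_mem _)).1, (hI1 _ (L.get_mem _)).2⟩
    · obtain ⟨h1, h2⟩ := hget' i (Nat.not_lt.mp h)
      rw [h2]
      exact ⟨mul_pos hb (htjpos _), htdiam _⟩
  · -- pairwise disjoint
    have key : ∀ i j, i < j → Disjoint (closedBall (cs i) (rs i)) (closedBall (cs j) (rs j)) := by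
      intro i j hij
      by_cases hj : j < len
      · have hi : i < len := hij.trans hj
        obtain ⟨hi1, hi2⟩ := hget i hi
        obtain ⟨hj1, hj2⟩ := hget j hj
        rw [hi1, hi2, hj1, hj2]
        exact List.pairwise_iff_get.mp hI2 ⟨i, hi⟩ ⟨j, hj⟩ hij
      · obtain ⟨hj1, hj2⟩ := hget' j (Nat.not_lt.mp hj)
        rw [hj1, hj2]
        by_cases hi : i < len
        · obtain ⟨hi1, hi2⟩ := hget i hi
          rw [hi1, hi2]
          exact htdisjL _ (L.get_mem _) _
        · obtain ⟨hi1, hi2⟩ := hget' i (Nat.not_lt.mp hi)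
          rw [hi1, hi2]
          exact htdisjT _ _ (by omega)
    intro i j hij
    rcases lt_or_gt_of_ne hij with h | h
    · exact key i j h
    · exact (key j i h).symm
  · -- the sum
    have hpartial : ∑ i ∈ Finset.range len, ENNReal.ofReal (rs i ^ s)
        = (L.map (fun p => ENNReal.ofReal (p.2^s))).sum := by
      rw [Finset.sum_range fun i => ENNReal.ofReal (rs i ^ s)]
      have h1 : (L.map (fun p => ENNReal.ofReal (p.2^s))).sum
          = ∑ i : Fin len, ENNReal.ofReal ((L.get i).2 ^ s) := by
        conv_lhs => rw [← List.ofFn_get L]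
        rw [List.map_ofFn, List.sum_ofFn]
        rfl
      rw [h1]
      apply Finset.sum_congr rfl
      intro i _
      congr 2
      exact (hget i i.isLt).2
    calc ENNReal.ofReal M ≤ (NN : ℝ≥0∞) * κ := hMN
      _ ≤ (L.map (fun p => ENNReal.ofReal (p.2^s))).sum := hI5
      _ = ∑ i ∈ Finset.range len, ENNReal.ofReal (rs i ^ s) := hpartial.symm
      _ ≤ ∑' i, ENNReal.ofReal (rs i ^ s) := ENNReal.sum_le_tsum _
end
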